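/- arXiv:1405.6669 — 4 statements merged into one kernel-verified Lean document; each statement's English description precedes it below -/
import Mathlib

section
/- Let $g \ge 1$ and let $G$ be a group containing elements $c_1,\dots,c_{2g+1}$ satisfying the braid relations, and set $\bar d_j = c_{j+1}^{-1} c_j c_{j+1}$. Then the sequence $(c_1, c_2, \dots, c_{2g+1}, c_1, c_2, \dots, c_{2g+1})$ of length $4g+2$ is Hurwitz equivalent up to simultaneous conjugation to the sequence $(\bar d_2, \bar d_4, \dots, \bar d_{2g}, c_1, c_2, \dots, c_{2g}, c_{2g+1}, \dots, c_{2g+1})$, where $c_{2g+1}$ is repeated $g+2$ times. -/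
/-- One elementary (Hurwitz) transformation of sequences in a group. -/
def HurwitzStep {G : Type*} [Group G] (s t : List G) : Prop :=
  ∃ (l₁ l₂ : List G) (x y : G),
    (s = l₁ ++ x :: y :: l₂ ∧ t = l₁ ++ (x * y * x⁻¹) :: x :: l₂) ∨
    (s = l₁ ++ x :: y :: l₂ ∧ t = l₁ ++ y :: (y⁻¹ * x * y) :: l₂)

/-- One move of Hurwitz equivalence up to simultaneous conjugation. -/
def HurwitzStepC {G : Type*} [Group G] (s t : List G) : Prop :=
  HurwitzStep s t ∨ ∃ ψ : G, t = s.map fun w => ψ * w * ψ⁻¹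

/-- Hurwitz equivalence up to simultaneous conjugation. -/
def HurwitzEquivC {G : Type*} [Group G] : List G → List G → Prop :=
  Relation.ReflTransGen HurwitzStepC

/-- The sequence `a m, a (m+1), …, a k` (ascending indices). -/
def seqAsc {G : Type*} (a : ℕ → G) (m k : ℕ) : List G :=
  (List.range (k + 1 - m)).map fun i => a (m + i)

/-!
Write `n = 2g+1` and `B = c₁ ⋯ cₙ`. The braid relations give `B cᵢ B⁻¹ = cᵢ₊₁` for `i < n`, so
pushing the second copy of `(c₁, …, cₙ)` entry by entry through the first yields
`(c₂, …, cₙ, c₁, …, cₙ, cₙ)`. Then come `g` stages. In stage `s` the sequence starts with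
`d̄₂, …, d̄₂ₛ` followed by `s` copies of `b = c₂ₛ₊₃`; conjugating everything by `b^-(s+1)` fixes
the entries commuting with `b`, and the block of `b`'s can then be moved along the sequence by
`(bᵏ, b⁻ᵏ y bᵏ) ∼ (y, bᵏ)`, undoing the conjugation entry by entry and producing `d̄₂ₛ₊₂`. The moves
`(x, y, xᵏ) ∼ (yᵏ, x, y)` for braided `x, y`, applied to `(c₂ₛ₊₃, c₂ₛ₊₄)` and `(c₂ₛ₊₄, c₂ₛ₊₅)`,
turn the `s+1` copies of `b` into copies of `c₂ₛ₊₅`. In the last stage `b = cₙ`, and its copies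
just collect at the end of the sequence.
-/

open List

section HurwitzMoves

variable {G : Type*} [Group G]

def HurwitzEquiv : List G → List G → Prop := Relation.ReflTransGen HurwitzStep

local infix:50 " ∼ " => HurwitzEquiv
local infix:50 " ∼C " => HurwitzEquivC

theorem HurwitzStep.append {s t : List G} (h : HurwitzStep s t) (l r : List G) :
    HurwitzStep (l ++ s ++ r) (l ++ t ++ r) := by
  obtain ⟨l₁, l₂, x, y, ⟨rfl, rfl⟩ | ⟨rfl, rfl⟩⟩ := h
  · exact ⟨l ++ l₁, l₂ ++ r, x, y, .inl ⟨by simp, by simp⟩⟩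
  · exact ⟨l ++ l₁, l₂ ++ r, x, y, .inr ⟨by simp, by simp⟩⟩

namespace HurwitzEquiv

theorem refl (s : List G) : s ∼ s := Relation.ReflTransGen.refl

theorem trans {s t u : List G} : s ∼ t → t ∼ u → s ∼ u := Relation.ReflTransGen.trans

instance : Trans (α := List G) HurwitzEquiv HurwitzEquiv HurwitzEquiv := ⟨trans⟩

theorem append {s t : List G} (h : s ∼ t) (l r : List G) : l ++ s ++ r ∼ l ++ t ++ r :=
  h.lift (fun u => l ++ u ++ r) fun _ _ hstep => hstep.append l r

theorem hurwitzEquivC {s t : List G} (h : s ∼ t) : s ∼C t :=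
  Relation.ReflTransGen.mono (fun _ _ => Or.inl) _ _ h

theorem swap (x y : G) : [x, y] ∼ [x * y * x⁻¹, x] :=
  .single ⟨[], [], x, y, .inl ⟨rfl, rfl⟩⟩

theorem append_singleton (L : List G) (x : G) :
    L ++ [x] ∼ (L.prod * x * L.prod⁻¹) :: L := by
  induction L with
  | nil => simpa using refl [x]
  | cons y L ih =>
    calc y :: L ++ [x] ∼ y :: (L.prod * x * L.prod⁻¹) :: L := by simpa using ih.append [y] []
      _ ∼ ((y :: L).prod * x * (y :: L).prod⁻¹) :: y :: L := by
        simpa [mul_assoc] using (swap y (L.prod * x * L.prod⁻¹)).append [] L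

theorem append_map_conj (B L : List G) :
    B ++ L ∼ L.map (fun x => B.prod * x * B.prod⁻¹) ++ B := by
  induction L with
  | nil => simpa using refl B
  | cons x L ih =>
    calc B ++ x :: L ∼ (B.prod * x * B.prod⁻¹) :: B ++ L := by
          simpa using (append_singleton B x).append [] L
      _ ∼ (x :: L).map (fun x => B.prod * x * B.prod⁻¹) ++ B := by
          simpa using ih.append [B.prod * x * B.prod⁻¹] []

theorem append_comm {B L : List G} (h : ∀ x ∈ B, ∀ y ∈ L, Commute x y) : B ++ L ∼ L ++ B := by
  have hL : L.map (fun y => B.prod * y * B.prod⁻¹) = L :=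
    (map_congr_left fun y hy =>
      (Commute.list_prod_left B y fun x hx => h x hx y hy).mul_inv_cancel).trans (map_id L)
  simpa [hL] using append_map_conj B L

theorem replicate_append_conj (b y : G) (n : ℕ) :
    replicate n b ++ [(b ^ n)⁻¹ * y * b ^ n] ∼ y :: replicate n b := by
  simpa [mul_assoc] using append_singleton (replicate n b) ((b ^ n)⁻¹ * y * b ^ n)

theorem braid {a b : G} (h : a * b * a = b * a * b) : [a, b, a] ∼ [b, a, b] := by
  have hb : a * (b * a * b⁻¹) * a⁻¹ = b := by
    calc a * (b * a * b⁻¹) * a⁻¹ = a * b * a * b⁻¹ * a⁻¹ := by group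
      _ = b := by rw [h]; group
  calc [a, b, a] ∼ [a, b * a * b⁻¹, b] := by simpa using (swap b a).append [a] []
    _ ∼ [a * (b * a * b⁻¹) * a⁻¹, a, b] := by simpa using (swap a (b * a * b⁻¹)).append [] [b]
    _ = [b, a, b] := by rw [hb]

theorem braid_replicate {a b : G} (h : a * b * a = b * a * b) (n : ℕ) :
    a :: b :: replicate n a ∼ replicate n b ++ [a, b] := by
  induction n with
  | zero => exact refl _
  | succ n ih =>
    calc a :: b :: replicate (n + 1) a ∼ b :: a :: b :: replicate n a := by
          simpa [replicate_succ] using (braid h).append [] (replicate n a)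
      _ ∼ replicate (n + 1) b ++ [a, b] := by simpa [replicate_succ] using ih.append [b] []

end HurwitzEquiv

theorem HurwitzEquivC.conj (ψ : G) (s : List G) : s ∼C s.map fun w => ψ * w * ψ⁻¹ :=
  .single (.inr ⟨ψ, rfl⟩)

theorem HurwitzEquivC.trans {s t u : List G} : s ∼C t → t ∼C u → s ∼C u :=
  Relation.ReflTransGen.trans

instance : Trans (α := List G) HurwitzEquivC HurwitzEquivC HurwitzEquivC :=
  ⟨HurwitzEquivC.trans⟩

end HurwitzMoves

section SeqAsc

variable {α : Type*} (a : ℕ → α)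

theorem seqAsc_eq_map_range' (m k : ℕ) : seqAsc a m k = (range' m (k + 1 - m)).map a := by
  simp [seqAsc, range'_eq_map_range, Function.comp_def]

theorem mem_seqAsc {m k : ℕ} {x : α} : x ∈ seqAsc a m k ↔ ∃ i, m ≤ i ∧ i ≤ k ∧ a i = x := by
  simp only [seqAsc_eq_map_range', mem_map, mem_range'_1]
  constructor
  · rintro ⟨i, hi, rfl⟩
    exact ⟨i, hi.1, by omega, rfl⟩
  · rintro ⟨i, hmi, hik, rfl⟩
    exact ⟨i, ⟨hmi, by omega⟩, rfl⟩

theorem seqAsc_append {m j k : ℕ} (hm : m ≤ j + 1) (hk : j ≤ k) :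
    seqAsc a m j ++ seqAsc a (j + 1) k = seqAsc a m k := by
  have h := range'_append_1 (s := m) (m := j + 1 - m) (n := k + 1 - (j + 1))
  rw [show m + (j + 1 - m) = j + 1 by omega, show j + 1 - m + (k + 1 - (j + 1)) = k + 1 - m by
    omega] at h
  simp only [seqAsc_eq_map_range', ← map_append, h]

theorem seqAsc_self (m : ℕ) : seqAsc a m m = [a m] := by
  simp [seqAsc]

theorem seqAsc_cons {m k : ℕ} (h : m ≤ k) : seqAsc a m k = a m :: seqAsc a (m + 1) k := by
  rw [← seqAsc_append a (by omega : m ≤ m + 1) h, seqAsc_self, singleton_append]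

theorem seqAsc_succ_right {m k : ℕ} (h : m ≤ k + 1) :
    seqAsc a m (k + 1) = seqAsc a m k ++ [a (k + 1)] := by
  rw [← seqAsc_append a h (Nat.le_succ k), seqAsc_self]

theorem map_seqAsc {β : Type*} (f : α → β) (m k : ℕ) :
    (seqAsc a m k).map f = seqAsc (f ∘ a) m k := by
  simp [seqAsc_eq_map_range']

theorem seqAsc_congr {b : ℕ → α} {m k : ℕ} (h : ∀ i, m ≤ i → i ≤ k → a i = b i) :
    seqAsc a m k = seqAsc b m k := by
  simp only [seqAsc_eq_map_range']
  exact map_congr_left fun i hi => by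
    rw [mem_range'_1] at hi
    exact h i (by omega) (by omega)

theorem seqAsc_succ_succ (m k : ℕ) :
    seqAsc a (m + 1) (k + 1) = seqAsc (fun i => a (i + 1)) m k := by
  simp [seqAsc, Nat.add_right_comm]

end SeqAsc

section BraidedSequences

variable {G : Type*} [Group G]

local infix:50 " ∼ " => HurwitzEquiv

structure BraidRelations (c : ℕ → G) (n : ℕ) : Prop where
  braid : ∀ i, 1 ≤ i → i + 1 ≤ n → c i * c (i + 1) * c i = c (i + 1) * c i * c (i + 1)
  comm : ∀ i j, 1 ≤ i → j ≤ n → i + 2 ≤ j → Commute (c i) (c j)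

namespace BraidRelations

variable {c : ℕ → G} {n : ℕ} (hc : BraidRelations c n)
include hc

theorem commute {i j : ℕ} (hi : 1 ≤ i) (hj : 1 ≤ j) (hin : i ≤ n) (hjn : j ≤ n)
    (hij : i + 2 ≤ j ∨ j + 2 ≤ i) : Commute (c i) (c j) := by
  rcases hij with hij | hij
  · exact hc.comm i j hi hjn hij
  · exact (hc.comm j i hj hin hij).symm

theorem commute_of_mem_seqAsc {k p q : ℕ} (hk : 1 ≤ k) (hkn : k ≤ n) (hp : 1 ≤ p)
    (hqn : q ≤ n) (hfar : q + 2 ≤ k ∨ k + 2 ≤ p) : ∀ x ∈ seqAsc c p q, Commute (c k) x := by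
  intro x hx
  obtain ⟨i, hpi, hiq, rfl⟩ := (mem_seqAsc c).1 hx
  exact hc.commute hk (by omega) hkn (by omega) (by omega)

theorem prod_seqAsc_mul {i : ℕ} (hi : 1 ≤ i) (hin : i < n) :
    (seqAsc c 1 n).prod * c i = c (i + 1) * (seqAsc c 1 n).prod := by
  set P := (seqAsc c 1 (i - 1)).prod
  set Q := (seqAsc c (i + 2) n).prod
  have hsplit :
      seqAsc c 1 n = seqAsc c 1 (i - 1) ++ c i :: c (i + 1) :: seqAsc c (i + 2) n := by
    have h := seqAsc_append c (m := 1) (j := i - 1) (k := n) (by omega) (by omega)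
    rwa [Nat.sub_add_cancel hi, seqAsc_cons c hin.le, seqAsc_cons c hin, eq_comm] at h
  have hQ : Commute (c i) Q :=
    Commute.list_prod_right _ _ (hc.commute_of_mem_seqAsc hi (by omega) (by omega) le_rfl
      (by omega))
  have hP : Commute P (c (i + 1)) :=
    (Commute.list_prod_right _ _ (hc.commute_of_mem_seqAsc (by omega) (by omega) le_rfl
      (by omega) (by omega))).symm
  rw [hsplit, prod_append, prod_cons, prod_cons]
  calc P * (c i * (c (i + 1) * Q)) * c i = P * (c i * c (i + 1)) * (Q * c i) := by group
    _ = P * (c i * c (i + 1) * c i) * Q := by rw [← hQ.eq]; group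
    _ = P * c (i + 1) * (c i * c (i + 1) * Q) := by rw [hc.braid i hi hin]; group
    _ = c (i + 1) * (P * (c i * (c (i + 1) * Q))) := by rw [hP.eq]; group

theorem map_conj_prod_seqAsc (hn : 1 ≤ n) :
    (seqAsc c 1 (n - 1)).map (fun x => (seqAsc c 1 n).prod * x * (seqAsc c 1 n).prod⁻¹) =
      seqAsc c 2 n := by
  rw [map_seqAsc]
  calc _ = seqAsc (fun i => c (i + 1)) 1 (n - 1) :=
        seqAsc_congr _ fun i h1 h2 => by simp [hc.prod_seqAsc_mul h1 (by omega)]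
    _ = seqAsc c 2 n := by rw [← seqAsc_succ_succ, Nat.sub_add_cancel hn]

theorem append_self_hurwitzEquiv (hn : 1 ≤ n) :
    seqAsc c 1 n ++ seqAsc c 1 n ∼ seqAsc c 2 n ++ seqAsc c 1 n ++ [c n] := by
  have hB : seqAsc c 1 (n - 1) ++ [c n] = seqAsc c 1 n := by
    have h := seqAsc_append c (m := 1) (j := n - 1) (k := n) (by omega) (by omega)
    rwa [Nat.sub_add_cancel hn, seqAsc_self] at h
  have h :=
    (HurwitzEquiv.append_map_conj (seqAsc c 1 n) (seqAsc c 1 (n - 1))).append [] [c n]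
  rw [hc.map_conj_prod_seqAsc hn] at h
  simpa only [nil_append, append_assoc, hB] using h

end BraidRelations

end BraidedSequences

section Stages

variable {G : Type*} [Group G]

local infix:50 " ∼ " => HurwitzEquiv
local infix:50 " ∼C " => HurwitzEquivC

theorem replicate_append_cons_self {α : Type*} (n : ℕ) (x : α) (l : List α) :
    replicate n x ++ x :: l = x :: (replicate n x ++ l) := by
  rw [← singleton_append, ← append_assoc, ← replicate_succ', replicate_succ, cons_append]

theorem Commute.inv_pow_mul_mul_pow {b x : G} (h : Commute b x) (k : ℕ) :
    (b ^ k)⁻¹ * x * b ^ k = x := by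
  simpa using ((h.pow_left k).inv_left).mul_inv_cancel

theorem map_inv_pow_mul_mul_pow {b : G} {L : List G} (h : ∀ x ∈ L, Commute b x) (k : ℕ) :
    L.map (fun x => (b ^ k)⁻¹ * x * b ^ k) = L :=
  (map_congr_left fun x hx => (h x hx).inv_pow_mul_mul_pow k).trans (map_id L)

theorem conj_pow_succ (b a : G) (n : ℕ) :
    (b ^ (n + 1))⁻¹ * a * b ^ (n + 1) = (b ^ n)⁻¹ * (b⁻¹ * a * b) * b ^ n := by
  group

theorem HurwitzEquiv.untwist (a e : G) {b w v : G} (n : ℕ)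
    (hw : w = (b ^ (n + 1))⁻¹ * a * b ^ (n + 1)) (hv : v = (b ^ (n + 1))⁻¹ * e * b ^ (n + 1))
    {W : List G} (hW : ∀ x ∈ W, Commute b x) (R : List G) :
    replicate n b ++ w :: b :: v :: (W ++ w :: b :: v :: R) ∼
      (b⁻¹ * a * b) :: e :: (W ++ a :: b :: e :: (replicate (n + 1) b ++ R)) := by
  have hbW : ∀ x ∈ replicate (n + 1) b, ∀ y ∈ W, Commute x y := by
    simp only [mem_replicate]
    rintro x ⟨-, rfl⟩ y hy
    exact hW y hy
  calc replicate n b ++ w :: b :: v :: (W ++ w :: b :: v :: R)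
      ∼ (b⁻¹ * a * b) :: (replicate (n + 1) b ++ [v]) ++ (W ++ w :: b :: v :: R) := by
        simpa [hw, conj_pow_succ, replicate_succ'] using
          (HurwitzEquiv.replicate_append_conj b (b⁻¹ * a * b) n).append []
            (b :: v :: (W ++ w :: b :: v :: R))
    _ ∼ (b⁻¹ * a * b) :: e :: (replicate (n + 1) b ++ W) ++ w :: b :: v :: R := by
        simpa [hv] using
          (HurwitzEquiv.replicate_append_conj b e (n + 1)).append [b⁻¹ * a * b]
            (W ++ w :: b :: v :: R)
    _ ∼ (b⁻¹ * a * b) :: e :: (W ++ replicate (n + 1) b) ++ w :: b :: v :: R := by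
        simpa using (HurwitzEquiv.append_comm hbW).append [b⁻¹ * a * b, e] (w :: b :: v :: R)
    _ ∼ (b⁻¹ * a * b) :: e :: W ++ a :: b :: (replicate (n + 1) b ++ [v]) ++ R := by
        simpa [← hw, replicate_append_cons_self] using
          (HurwitzEquiv.replicate_append_conj b a (n + 1)).append ((b⁻¹ * a * b) :: e :: W)
            (b :: v :: R)
    _ ∼ (b⁻¹ * a * b) :: e :: (W ++ a :: b :: e :: (replicate (n + 1) b ++ R)) := by
        simpa [← hv] using
          (HurwitzEquiv.replicate_append_conj b e (n + 1)).append
            ((b⁻¹ * a * b) :: e :: W ++ [a, b]) R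

theorem HurwitzEquiv.braid_replicate_twice {b e f : G} (hbe : b * e * b = e * b * e)
    (hef : e * f * e = f * e * f) {X : List G} (hX : ∀ x ∈ X, Commute e x) (n : ℕ) :
    e :: f :: (X ++ b :: e :: replicate n b) ∼ replicate n f ++ e :: f :: (X ++ [b, e]) := by
  have heX : ∀ x ∈ X, ∀ y ∈ replicate n e, Commute x y := by
    simp only [mem_replicate]
    rintro x hx y ⟨-, rfl⟩
    exact (hX x hx).symm
  calc e :: f :: (X ++ b :: e :: replicate n b) ∼ e :: f :: (X ++ replicate n e) ++ [b, e] := by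
        simpa using (HurwitzEquiv.braid_replicate hbe n).append (e :: f :: X) []
    _ ∼ e :: f :: replicate n e ++ X ++ [b, e] := by
        simpa using (HurwitzEquiv.append_comm heX).append [e, f] [b, e]
    _ ∼ replicate n f ++ e :: f :: (X ++ [b, e]) := by
        simpa using (HurwitzEquiv.braid_replicate hef n).append [] (X ++ [b, e])

/-- With `(a, b, e, f) = (c₂ₛ₊₂, c₂ₛ₊₃, c₂ₛ₊₄, c₂ₛ₊₅)`, `U = (c₂ₛ₊₆, …, cₙ)`, `V = (c₁, …, c₂ₛ₊₁)`
and `k = s`, this is one stage of the proof. -/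
theorem hurwitzEquivC_stage {a b e f : G} (hbe : b * e * b = e * b * e)
    (hef : e * f * e = f * e * f) {D U V T : List G} (k : ℕ)
    (hb : ∀ x ∈ D ++ f :: U ++ V ++ T, Commute b x) (he : ∀ x ∈ U ++ V ++ [a], Commute e x) :
    D ++ replicate k b ++ a :: b :: e :: f :: U ++ V ++ a :: b :: e :: f :: U ++ T ∼C
      D ++ (b⁻¹ * a * b) :: replicate (k + 1) f ++ e :: f :: U ++ V ++ a :: b :: e :: f :: U ++
        T := by
  have hbW : ∀ x ∈ f :: U ++ V, Commute b x := fun x hx =>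
    hb x (by simp only [mem_append, mem_cons] at hx ⊢; tauto)
  set w := (b ^ (k + 1))⁻¹ * a * b ^ (k + 1)
  set v := (b ^ (k + 1))⁻¹ * e * b ^ (k + 1)
  calc _ ∼C _ := HurwitzEquivC.conj (b ^ (k + 1))⁻¹ _
    _ = D ++ (replicate k b ++ w :: b :: v :: (f :: U ++ V ++ w :: b :: v :: (f :: U ++ T))) := by
      simp [w, v, (Commute.refl b).inv_pow_mul_mul_pow, (hb f (by simp)).inv_pow_mul_mul_pow,
        map_inv_pow_mul_mul_pow (L := D) fun x hx => hb x (by simp [hx]),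
        map_inv_pow_mul_mul_pow (L := U) fun x hx => hb x (by simp [hx]),
        map_inv_pow_mul_mul_pow (L := V) fun x hx => hb x (by simp [hx]),
        map_inv_pow_mul_mul_pow (L := T) fun x hx => hb x (by simp [hx])]
    _ ∼C _ := by
      refine HurwitzEquiv.hurwitzEquivC ?_
      have h1 := (HurwitzEquiv.untwist a e k rfl rfl hbW (f :: U ++ T)).append D []
      have h2 := (HurwitzEquiv.braid_replicate_twice hbe hef he (k + 1)).append
        (D ++ [b⁻¹ * a * b]) (f :: U ++ T)
      simp only [append_assoc, cons_append, nil_append, append_nil] at h1 h2 ⊢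
      exact h1.trans h2

theorem hurwitzEquivC_last_stage {a b : G} {D V : List G} (k : ℕ)
    (hb : ∀ x ∈ D ++ V, Commute b x) :
    D ++ replicate k b ++ a :: b :: V ++ [a, b, b] ∼C
      D ++ (b⁻¹ * a * b) :: V ++ a :: replicate (k + 3) b := by
  have hbV : ∀ x ∈ replicate (k + 1) b, ∀ y ∈ V, Commute x y := by
    simp only [mem_replicate]
    rintro x ⟨-, rfl⟩ y hy
    exact hb y (by simp [hy])
  set w := (b ^ (k + 1))⁻¹ * a * b ^ (k + 1)
  calc _ ∼C _ := HurwitzEquivC.conj (b ^ (k + 1))⁻¹ _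
    _ = D ++ (replicate k b ++ [w]) ++ b :: V ++ [w, b, b] := by
      simp [w, (Commute.refl b).inv_pow_mul_mul_pow,
        map_inv_pow_mul_mul_pow (L := D) fun x hx => hb x (by simp [hx]),
        map_inv_pow_mul_mul_pow (L := V) fun x hx => hb x (by simp [hx])]
    _ ∼C D ++ (b⁻¹ * a * b) :: (replicate (k + 1) b ++ V) ++ [w, b, b] := by
      refine HurwitzEquiv.hurwitzEquivC ?_
      simpa [w, conj_pow_succ, replicate_succ'] using
        (HurwitzEquiv.replicate_append_conj b (b⁻¹ * a * b) k).append D (b :: V ++ [w, b, b])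
    _ ∼C D ++ (b⁻¹ * a * b) :: V ++ (replicate (k + 1) b ++ [w]) ++ [b, b] := by
      refine HurwitzEquiv.hurwitzEquivC ?_
      simpa using (HurwitzEquiv.append_comm hbV).append (D ++ [b⁻¹ * a * b]) [w, b, b]
    _ ∼C _ := by
      refine HurwitzEquiv.hurwitzEquivC ?_
      simpa [w, replicate_append_cons_self, replicate_succ] using
        (HurwitzEquiv.replicate_append_conj b a (k + 1)).append (D ++ (b⁻¹ * a * b) :: V) [b, b]

end Stages

section StageSequences

variable {G : Type*} [Group G]

local infix:50 " ∼ " => HurwitzEquiv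
local infix:50 " ∼C " => HurwitzEquivC

def dbarList (c : ℕ → G) (s : ℕ) : List G :=
  (List.range s).map fun j => (c (2 * j + 3))⁻¹ * c (2 * j + 2) * c (2 * j + 3)

def stageSeq (c : ℕ → G) (n s : ℕ) : List G :=
  dbarList c s ++ replicate s (c (2 * s + 3)) ++ seqAsc c (2 * s + 2) n ++ seqAsc c 1 n ++ [c n]

theorem dbarList_succ (c : ℕ → G) (s : ℕ) :
    dbarList c (s + 1) = dbarList c s ++ [(c (2 * s + 3))⁻¹ * c (2 * s + 2) * c (2 * s + 3)] := by
  simp [dbarList, range_succ]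

namespace BraidRelations

variable {c : ℕ → G} {n : ℕ} (hc : BraidRelations c n)
include hc

theorem commute_of_mem_dbarList {s k : ℕ} (hk : 2 * s + 3 ≤ k) (hkn : k ≤ n) :
    ∀ x ∈ dbarList c s, Commute (c k) x := by
  simp only [dbarList, mem_map, mem_range]
  rintro _ ⟨j, hj, rfl⟩
  have h₂ := hc.commute (i := k) (j := 2 * j + 2) (by omega) (by omega) hkn (by omega) (by omega)
  have h₃ := hc.commute (i := k) (j := 2 * j + 3) (by omega) (by omega) hkn (by omega) (by omega)
  exact (h₃.inv_right.mul_right h₂).mul_right h₃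

theorem hurwitzEquiv_stageSeq_zero (hn : 1 ≤ n) :
    seqAsc c 1 n ++ seqAsc c 1 n ∼ stageSeq c n 0 := by
  simpa [stageSeq, dbarList] using hc.append_self_hurwitzEquiv hn

theorem stageSeq_succ {s : ℕ} (hs : 2 * s + 5 ≤ n) :
    stageSeq c n s ∼C stageSeq c n (s + 1) := by
  have hU : seqAsc c (2 * s + 2) n = c (2 * s + 2) :: c (2 * s + 3) :: c (2 * s + 4) ::
      c (2 * s + 5) :: seqAsc c (2 * s + 6) n := by
    rw [seqAsc_cons c (by omega), seqAsc_cons c (by omega), seqAsc_cons c (by omega),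
      seqAsc_cons c (by omega)]
  have hU' : seqAsc c (2 * (s + 1) + 2) n =
      c (2 * s + 4) :: c (2 * s + 5) :: seqAsc c (2 * s + 6) n := by
    rw [show 2 * (s + 1) + 2 = 2 * s + 4 by ring, seqAsc_cons c (by omega),
      seqAsc_cons c (by omega)]
  have hV : seqAsc c 1 n = seqAsc c 1 (2 * s + 1) ++ seqAsc c (2 * s + 2) n :=
    (seqAsc_append c (by omega) (by omega)).symm
  have hb : ∀ x ∈ dbarList c s ++ c (2 * s + 5) :: seqAsc c (2 * s + 6) n ++
      seqAsc c 1 (2 * s + 1) ++ [c n], Commute (c (2 * s + 3)) x := by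
    simp only [mem_append, mem_cons, not_mem_nil, or_false]
    rintro x (((hx | rfl | hx) | hx) | rfl)
    · exact hc.commute_of_mem_dbarList le_rfl (by omega) x hx
    · exact hc.commute (by omega) (by omega) (by omega) (by omega) (by omega)
    · exact hc.commute_of_mem_seqAsc (by omega) (by omega) (by omega) le_rfl (by omega) x hx
    · exact hc.commute_of_mem_seqAsc (by omega) (by omega) le_rfl (by omega) (by omega) x hx
    · exact hc.commute (by omega) (by omega) (by omega) le_rfl (by omega)
  have he : ∀ x ∈ seqAsc c (2 * s + 6) n ++ seqAsc c 1 (2 * s + 1) ++ [c (2 * s + 2)],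
      Commute (c (2 * s + 4)) x := by
    simp only [mem_append, mem_cons, not_mem_nil, or_false]
    rintro x ((hx | hx) | rfl)
    · exact hc.commute_of_mem_seqAsc (by omega) (by omega) (by omega) le_rfl (by omega) x hx
    · exact hc.commute_of_mem_seqAsc (by omega) (by omega) le_rfl (by omega) (by omega) x hx
    · exact hc.commute (by omega) (by omega) (by omega) (by omega) (by omega)
  have h := hurwitzEquivC_stage (hc.braid _ (by omega) (by omega))
    (hc.braid _ (by omega) (by omega)) s hb he
  rw [stageSeq, stageSeq, hV, hU, hU', dbarList_succ, show 2 * (s + 1) + 3 = 2 * s + 5 by ring]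
  simpa using h

theorem stageSeq_zero_hurwitzEquivC {s : ℕ} (hs : 2 * s + 3 ≤ n) :
    stageSeq c n 0 ∼C stageSeq c n s := by
  induction s with
  | zero => exact Relation.ReflTransGen.refl
  | succ s ih => exact (ih (by omega)).trans (hc.stageSeq_succ (by omega))

end BraidRelations

theorem BraidRelations.stageSeq_pred_hurwitzEquivC {c : ℕ → G} {g : ℕ}
    (hc : BraidRelations c (2 * g + 1)) (hg : 1 ≤ g) :
    stageSeq c (2 * g + 1) (g - 1) ∼C
      dbarList c g ++ seqAsc c 1 (2 * g) ++ replicate (g + 2) (c (2 * g + 1)) := by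
  obtain ⟨s, rfl⟩ : ∃ s, g = s + 1 := ⟨g - 1, by omega⟩
  rw [show 2 * (s + 1) + 1 = 2 * s + 3 by ring] at hc ⊢
  have hU : seqAsc c (2 * s + 2) (2 * s + 3) = [c (2 * s + 2), c (2 * s + 3)] := by
    rw [seqAsc_succ_right c (k := 2 * s + 2) (by omega), seqAsc_self]; rfl
  have hV : seqAsc c 1 (2 * s + 2) = seqAsc c 1 (2 * s + 1) ++ [c (2 * s + 2)] :=
    seqAsc_succ_right c (k := 2 * s + 1) (by omega)
  have hV' : seqAsc c 1 (2 * s + 3) =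
      seqAsc c 1 (2 * s + 1) ++ [c (2 * s + 2), c (2 * s + 3)] := by
    rw [seqAsc_succ_right c (k := 2 * s + 2) (by omega), hV, append_assoc]; rfl
  have hb : ∀ x ∈ dbarList c s ++ seqAsc c 1 (2 * s + 1), Commute (c (2 * s + 3)) x := by
    simp only [mem_append]
    rintro x (hx | hx)
    · exact hc.commute_of_mem_dbarList le_rfl le_rfl x hx
    · exact hc.commute_of_mem_seqAsc (by omega) le_rfl le_rfl (by omega) (by omega) x hx
  have h := hurwitzEquivC_last_stage (a := c (2 * s + 2)) s hb
  rw [Nat.add_sub_cancel, stageSeq, show 2 * (s + 1) = 2 * s + 2 by ring, hU, hV, hV',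
    dbarList_succ]
  simpa using h

end StageSequences

/-- relation (12) of the paper: with `d̄ j = (c (j+1))⁻¹ * c j * c (j+1)`,
the sequence `(c 1, …, c (2g+1), c 1, …, c (2g+1))` is Hurwitz equivalent up to
simultaneous conjugation to
`(d̄ 2, d̄ 4, …, d̄ (2g), c 1, c 2, …, c (2g), (c (2g+1))^{g+2})`. -/
theorem statement15 {G : Type*} [Group G] (g : ℕ) (hg : 1 ≤ g) (c : ℕ → G)
    (hbraid : ∀ i, 1 ≤ i → i + 1 ≤ 2 * g + 1 →
      c i * c (i + 1) * c i = c (i + 1) * c i * c (i + 1))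
    (hcomm : ∀ i j, 1 ≤ i → j ≤ 2 * g + 1 → i + 2 ≤ j → c i * c j = c j * c i) :
    HurwitzEquivC
      (seqAsc c 1 (2 * g + 1) ++ seqAsc c 1 (2 * g + 1))
      (((List.range g).map fun j =>
          (c (2 * j + 3))⁻¹ * c (2 * j + 2) * c (2 * j + 3)) ++
        seqAsc c 1 (2 * g) ++
        List.replicate (g + 2) (c (2 * g + 1))) := by
  have hc : BraidRelations c (2 * g + 1) := ⟨hbraid, hcomm⟩
  calc HurwitzEquivC _ (stageSeq c (2 * g + 1) 0) :=
        (hc.hurwitzEquiv_stageSeq_zero (by omega)).hurwitzEquivC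
    HurwitzEquivC _ (stageSeq c (2 * g + 1) (g - 1)) := hc.stageSeq_zero_hurwitzEquivC (by omega)
    HurwitzEquivC _ _ := hc.stageSeq_pred_hurwitzEquivC hg
end

section
/- Let $g \ge 3$ and let $G$ be a group containing elements $c_1,\dots,c_{2g+1}$ and $x_1,\dots,x_g$. Set $\bar d_i = c_{i+1}^{-1} c_i c_{i+1}$, $e_{i+1} = c_i c_{i+1} c_i^{-1}$, and $\varphi = c_{2g+1}^{g+1} c_{2g-1}^{g} \cdots c_5^{3} c_3^{2} c_1$. Assume: (i) $c_1,\dots,c_{2g+1}$ satisfy the braid relations; (ii) the hyperelliptic relation $(c_1 c_2 \cdots c_{2g-1} c_{2g} c_{2g+1}^2 c_{2g} c_{2g-1} \cdots c_2 c_1)^2 = 1$ holds; (iii) the element $c_{2g} c_{2g-1} \cdots c_2 c_1 c_1 c_2 \cdots c_{2g-1} c_{2g}$ commutes with $c_{2g+1}$; (iv) the daisy relation $x_1 x_2 \cdots x_g = c_1 c_3 c_5 \cdots c_{2g-1} \cdot c_{2g+1}^{g-2}$ holds. Then $(\varphi^{-1} \bar d_{2g} \varphi)(\varphi^{-1} \bar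 d_{2g-1} \varphi) \cdots (\varphi^{-1} \bar d_2 \varphi)(\varphi^{-1} \bar d_1 \varphi) \cdot \bar d_2 \bar d_4 \cdots \bar d_{2g} \cdot e_2 e_4 \cdots e_{2g} \cdot x_1 x_2 \cdots x_g \cdot c_{2g+1}^{2g+6} = 1$. -/
/-- The product `a k * a (k-1) * ⋯ * a m` (descending indices). -/
def prodDesc {G : Type*} [Group G] (a : ℕ → G) (k m : ℕ) : G :=
  ((List.range (k + 1 - m)).map fun i => a (k - i)).prod

/-- The product `a m * a (m+1) * ⋯ * a k` (ascending indices). -/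
def prodAsc {G : Type*} [Group G] (a : ℕ → G) (m k : ℕ) : G :=
  ((List.range (k + 1 - m)).map fun i => a (m + i)).prod

/-- `φ = a (2g+1) ^ (g+1) * a (2g-1) ^ g * ⋯ * a 5 ^ 3 * a 3 ^ 2 * a 1`. -/
def phiOdd {G : Type*} [Group G] (a : ℕ → G) (l : ℕ) : G :=
  ((List.range (l + 1)).map fun j => a (2 * (l - j) + 1) ^ (l - j + 1)).prod

/-!
Write `a, b, t` for three consecutive generators `c k, c (k+1), c (k+2)`. The braid relations
make `w = b t a b` conjugate `a` to `t` and `t` to `a`, and they give `d̄ (k+1) d̄ k = t⁻² w`.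
Pushing powers of `a` and `t` through `w`, induction on `h` yields
`c (2h+1)^(2h+2) · d̄ (2h) ⋯ d̄ 1 · φ_h = c 1^2 c 3^3 ⋯ c (2h-1)^(h+1) · (c (2h+1) ⋯ c 1)^2 · c 1`.

The braid relations also turn `d̄ 2 d̄ 4 ⋯ d̄ (2g)` into `(c 2 ⋯ c (2g+1)) (c 2 c 4 ⋯ c (2g))⁻¹` and
`e 2 e 4 ⋯ e (2g)` into `(c 1 ⋯ c (2g)) (c 1 c 3 ⋯ c (2g-1))⁻¹`, so that with the daisy relation
the relator becomes an expression in `ι = c (2g+1) ⋯ c 1 · c 1 ⋯ c (2g+1)`. Conjugation by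
`c k ⋯ c 1` shifts `c (i+1)` down to `c i` and conjugation by `c 1 ⋯ c k` shifts it back up, so `ι`
commutes with `c 1, …, c (2g)`, and by (iii) with `c (2g+1)`; moreover `ι` is conjugate to
`c 1 ⋯ c (2g) · c (2g+1)^2 · c (2g) ⋯ c 1`, whose square is `1` by (ii). This collapses the relator.
-/

namespace HyperellipticDaisy

variable {G : Type*} [Group G]

section ThreeGenerators

variable {a b t : G}

theorem inv_mul_mul_eq_mul_mul_inv (hab : a * b * a = b * a * b) :
    b⁻¹ * a * b = a * b * a⁻¹ :=
  calc b⁻¹ * a * b = b⁻¹ * (a * b * a) * a⁻¹ := by group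
    _ = a * b * a⁻¹ := by rw [hab]; group

theorem semiconjBy_braid_left (hab : a * b * a = b * a * b) (hbt : b * t * b = t * b * t) :
    SemiconjBy (b * t * a * b) a t :=
  calc b * t * a * b * a = b * t * (a * b * a) := by group
    _ = b * t * b * a * b := by rw [hab]; group
    _ = t * (b * t * a * b) := by rw [hbt]; group

theorem semiconjBy_braid_right (hab : a * b * a = b * a * b) (hbt : b * t * b = t * b * t)
    (hat : Commute a t) : SemiconjBy (b * t * a * b) t a :=
  calc b * t * a * b * t = b * (t * a) * b * t := by group
    _ = b * a * (t * b * t) := by rw [← hat.eq]; group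
    _ = b * a * b * t * b := by rw [← hbt]; group
    _ = a * b * (a * t) * b := by rw [← hab]; group
    _ = a * (b * t * a * b) := by rw [hat.eq]; group

theorem pow_mul_conj_mul_conj_mul_pow (hab : a * b * a = b * a * b)
    (hbt : b * t * b = t * b * t) (hat : Commute a t) (n m : ℕ) :
    t ^ (n + 2) * (t⁻¹ * b * t * (b⁻¹ * a * b)) * t ^ m * (a ^ n)⁻¹ =
      a ^ m * (b * t * a * b) := by
  have hw := semiconjBy_braid_left hab hbt
  have hw' := semiconjBy_braid_right hab hbt hat
  calc t ^ (n + 2) * (t⁻¹ * b * t * (b⁻¹ * a * b)) * t ^ m * (a ^ n)⁻¹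
      = t ^ n * (t * b * t) * b⁻¹ * a * b * t ^ m * (a ^ n)⁻¹ := by group
    _ = t ^ n * (b * t * a * b * t ^ m) * (a ^ n)⁻¹ := by rw [← hbt]; group
    _ = t ^ n * a ^ m * (b * t * a * b * (a ^ n)⁻¹) := by rw [(hw'.pow_right m).eq]; group
    _ = t ^ n * a ^ m * (t ^ n)⁻¹ * (b * t * a * b) := by
      rw [((hw.pow_right n).inv_right).eq]; group
    _ = a ^ m * (b * t * a * b) := by rw [← (hat.pow_pow m n).eq]; group

end ThreeGenerators

theorem prod_map_conj {α : Type*} (l : List α) (f : α → G) (x : G) :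
    (l.map fun i => x⁻¹ * f i * x).prod = x⁻¹ * (l.map f).prod * x := by
  induction l with
  | nil => simp
  | cons i l ih => simp only [List.map_cons, List.prod_cons, ih]; group

section Products

variable (c : ℕ → G)

def dbar (i : ℕ) : G := (c (i + 1))⁻¹ * c i * c (i + 1)

def oddProd (k : ℕ) : G := ((List.range k).map fun j => c (2 * j + 1)).prod

def oddPowProd : ℕ → G
  | 0 => 1
  | h + 1 => oddPowProd h * c (2 * h + 1) ^ (h + 2)

theorem prodDesc_succ {k m : ℕ} (hm : m ≤ k + 1) :
    prodDesc c (k + 1) m = c (k + 1) * prodDesc c k m := by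
  simp only [prodDesc, Nat.sub_add_comm hm, List.prod_range_succ', Nat.sub_zero,
    Nat.succ_eq_add_one, Nat.add_sub_add_right]

theorem prodAsc_succ {m k : ℕ} (hm : m ≤ k + 1) :
    prodAsc c m (k + 1) = prodAsc c m k * c (k + 1) := by
  simp only [prodAsc, Nat.sub_add_comm hm, List.prod_range_succ, Nat.add_sub_cancel' hm]

theorem prodAsc_one_succ (k : ℕ) :
    prodAsc c 1 (k + 1) = c 1 * prodAsc (fun i => c (i + 1)) 1 k := by
  simp only [prodAsc, Nat.add_sub_cancel, List.prod_range_succ',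
    Nat.succ_eq_add_one, Nat.add_comm 1]

theorem prodDesc_one_eq (k : ℕ) :
    prodDesc c k 1 = ((List.range k).map fun i => c (k - i)).prod := by
  simp [prodDesc]

theorem prodDesc_mul_prodAsc_succ (n : ℕ) : prodDesc c (n + 1) 1 * prodAsc c 1 (n + 1) =
    c (n + 1) * (prodDesc c n 1 * prodAsc c 1 n) * c (n + 1) := by
  rw [prodDesc_succ c (by omega), prodAsc_succ c (by omega)]; group

theorem sq_prodDesc_mul_prodAsc_succ {n : ℕ}
    (h : (prodAsc c 1 n * c (n + 1) ^ 2 * prodDesc c n 1) ^ 2 = 1) :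
    (prodDesc c (n + 1) 1 * prodAsc c 1 (n + 1)) ^ 2 = 1 := by
  rw [prodDesc_mul_prodAsc_succ, show c (n + 1) * (prodDesc c n 1 * prodAsc c 1 n) * c (n + 1) =
      c (n + 1) * prodDesc c n 1 * (prodAsc c 1 n * c (n + 1) ^ 2 * prodDesc c n 1) *
        (c (n + 1) * prodDesc c n 1)⁻¹ by group, conj_pow, h]
  group

theorem phiOdd_zero : phiOdd c 0 = c 1 := by simp [phiOdd]

theorem phiOdd_succ (l : ℕ) : phiOdd c (l + 1) = c (2 * l + 3) ^ (l + 2) * phiOdd c l := by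
  simp only [phiOdd, List.prod_range_succ' _ (l + 1), Nat.sub_zero, Nat.succ_eq_add_one,
    Nat.add_sub_add_right]
  ring_nf

theorem oddProd_succ (k : ℕ) : oddProd c (k + 1) = oddProd c k * c (2 * k + 1) :=
  List.prod_range_succ _ k

variable {c} {x : G}

theorem commute_prodDesc {k m : ℕ} (h : ∀ j, m ≤ j → j ≤ k → Commute x (c j)) :
    Commute x (prodDesc c k m) :=
  Commute.list_prod_right _ _ <| by
    simp only [List.mem_map, List.mem_range]
    rintro _ ⟨i, hi, rfl⟩
    exact h _ (by omega) (by omega)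

theorem commute_prodAsc {m k : ℕ} (h : ∀ j, m ≤ j → j ≤ k → Commute x (c j)) :
    Commute x (prodAsc c m k) :=
  Commute.list_prod_right _ _ <| by
    simp only [List.mem_map, List.mem_range]
    rintro _ ⟨i, hi, rfl⟩
    exact h _ (by omega) (by omega)

theorem commute_oddProd {k : ℕ} (h : ∀ j < k, Commute x (c (2 * j + 1))) :
    Commute x (oddProd c k) :=
  Commute.list_prod_right _ _ <| by
    simp only [List.mem_map, List.mem_range]
    rintro _ ⟨j, hj, rfl⟩
    exact h j hj

theorem commute_phiOdd {l : ℕ} (h : ∀ j ≤ l, Commute x (c (2 * j + 1))) :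
    Commute x (phiOdd c l) :=
  Commute.list_prod_right _ _ <| by
    simp only [List.mem_map, List.mem_range]
    rintro _ ⟨j, hj, rfl⟩
    exact (h _ (Nat.sub_le l j)).pow_right _

theorem commute_oddPowProd {k : ℕ} (h : ∀ j < k, Commute x (c (2 * j + 1))) :
    Commute x (oddPowProd c k) := by
  induction k with
  | zero => exact Commute.one_right x
  | succ k ih => exact (ih fun j hj => h j (by omega)).mul_right ((h k (by omega)).pow_right _)

end Products

structure IsChain (c : ℕ → G) (n : ℕ) : Prop where
  braid : ∀ i, 1 ≤ i → i + 1 ≤ n → c i * c (i + 1) * c i = c (i + 1) * c i * c (i + 1)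
  comm : ∀ i j, 1 ≤ i → j ≤ n → i + 2 ≤ j → Commute (c i) (c j)

namespace IsChain

variable {c : ℕ → G} {n : ℕ}

theorem mono (hc : IsChain c n) {m : ℕ} (hmn : m ≤ n) : IsChain c m :=
  ⟨fun i hi him => hc.braid i hi (by omega),
    fun i j hi hjm hij => hc.comm i j hi (by omega) hij⟩

theorem shift (hc : IsChain c (n + 1)) : IsChain (fun i => c (i + 1)) n :=
  ⟨fun i hi hin => hc.braid (i + 1) (by omega) (by omega),
    fun i j hi hjn hij => hc.comm (i + 1) (j + 1) (by omega) (by omega) (by omega)⟩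

theorem commute_of_add_two_le (hc : IsChain c n) {i j : ℕ} (hi : 1 ≤ i) (hij : i + 2 ≤ j)
    (hjn : j ≤ n) : Commute (c j) (c i) :=
  (hc.comm i j hi hjn hij).symm

theorem semiconjBy_prodDesc (hc : IsChain c n) {i k : ℕ} (hi : 1 ≤ i) (hik : i + 1 ≤ k)
    (hkn : k ≤ n) : SemiconjBy (prodDesc c k 1) (c (i + 1)) (c i) := by
  induction k, hik using Nat.le_induction with
  | base =>
    obtain ⟨j, rfl⟩ : ∃ j, i = j + 1 := ⟨i - 1, by omega⟩
    have hS : Commute (c (j + 2)) (prodDesc c j 1) :=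
      commute_prodDesc fun l hl hlj => hc.commute_of_add_two_le hl (by omega) (by omega)
    have hbr : c (j + 1) * c (j + 2) * c (j + 1) = c (j + 2) * c (j + 1) * c (j + 2) :=
      hc.braid (j + 1) (by omega) (by omega)
    rw [prodDesc_succ c (by omega), prodDesc_succ c (by omega)]
    calc c (j + 2) * (c (j + 1) * prodDesc c j 1) * c (j + 2)
        = c (j + 2) * c (j + 1) * (prodDesc c j 1 * c (j + 2)) := by group
      _ = c (j + 1) * (c (j + 2) * (c (j + 1) * prodDesc c j 1)) := by
        rw [← hS.eq, ← mul_assoc, ← hbr]; group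
  | succ k hik ih =>
    rw [prodDesc_succ c (by omega)]
    exact SemiconjBy.mul_left (hc.commute_of_add_two_le hi (by omega) hkn) (ih (by omega))

theorem semiconjBy_prodAsc (hc : IsChain c n) {i k : ℕ} (hi : 1 ≤ i) (hik : i + 1 ≤ k)
    (hkn : k ≤ n) : SemiconjBy (prodAsc c 1 k) (c i) (c (i + 1)) := by
  induction k, hik using Nat.le_induction with
  | base =>
    obtain ⟨j, rfl⟩ : ∃ j, i = j + 1 := ⟨i - 1, by omega⟩
    have hA : Commute (c (j + 2)) (prodAsc c 1 j) :=
      commute_prodAsc fun l hl hlj => hc.commute_of_add_two_le hl (by omega) (by omega)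
    have hbr : c (j + 1) * c (j + 2) * c (j + 1) = c (j + 2) * c (j + 1) * c (j + 2) :=
      hc.braid (j + 1) (by omega) (by omega)
    rw [prodAsc_succ c (by omega), prodAsc_succ c (by omega)]
    calc prodAsc c 1 j * c (j + 1) * c (j + 2) * c (j + 1)
        = prodAsc c 1 j * c (j + 2) * (c (j + 1) * c (j + 2)) := by
          rw [mul_assoc (prodAsc c 1 j), mul_assoc (prodAsc c 1 j), hbr]; group
      _ = c (j + 2) * (prodAsc c 1 j * c (j + 1) * c (j + 2)) := by rw [← hA.eq]; group
  | succ k hik ih =>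
    rw [prodAsc_succ c (by omega)]
    exact (ih (by omega)).mul_left (hc.commute_of_add_two_le hi (by omega) hkn)

theorem commute_prodDesc_mul_prodAsc (hc : IsChain c n) {i : ℕ} (hi : 1 ≤ i) (hin : i < n) :
    Commute (prodDesc c n 1 * prodAsc c 1 n) (c i) :=
  (hc.semiconjBy_prodDesc hi hin le_rfl).mul_left (hc.semiconjBy_prodAsc hi hin le_rfl)

theorem semiconjBy_oddProd (hc : IsChain c n) {k : ℕ} (hkn : 2 * k ≤ n) :
    SemiconjBy (prodDesc c n 1) (oddProd (fun i => c (i + 1)) k) (oddProd c k) := by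
  induction k with
  | zero => exact SemiconjBy.one_right _
  | succ k ih =>
    rw [oddProd_succ, oddProd_succ]
    exact (ih (by omega)).mul_right (hc.semiconjBy_prodDesc (by omega) (by omega) le_rfl)

theorem prod_conj_eq_prodAsc_mul_inv (hc : IsChain c n) {k : ℕ} (hkn : 2 * k ≤ n) :
    ((List.range k).map fun j => c (2 * j + 1) * c (2 * j + 2) * (c (2 * j + 1))⁻¹).prod =
      prodAsc c 1 (2 * k) * (oddProd c k)⁻¹ := by
  induction k with
  | zero => simp [prodAsc, oddProd]
  | succ k ih =>
    have h1 := fun j (hj : j < k) => hc.commute_of_add_two_le (i := 2 * j + 1) (j := 2 * k + 1)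
      (by omega) (by omega) (by omega)
    have h2 := fun j (hj : j < k) => hc.commute_of_add_two_le (i := 2 * j + 1) (j := 2 * k + 2)
      (by omega) (by omega) (by omega)
    have hP : Commute (c (2 * k + 1) * c (2 * k + 2) * (c (2 * k + 1))⁻¹) (oddProd c k) :=
      commute_oddProd fun j hj => ((h1 j hj).mul_left (h2 j hj)).mul_left (h1 j hj).inv_left
    rw [List.prod_range_succ, ih (by omega), show 2 * (k + 1) = 2 * k + 1 + 1 by ring,
      prodAsc_succ c (by omega), prodAsc_succ c (by omega), oddProd_succ, mul_assoc,
      ← hP.inv_right.eq]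
    group

theorem prod_dbar_eq_prodAsc_mul_inv (hc : IsChain c (n + 1)) {k : ℕ} (hkn : 2 * k ≤ n) :
    ((List.range k).map fun j => (c (2 * j + 3))⁻¹ * c (2 * j + 2) * c (2 * j + 3)).prod =
      prodAsc (fun i => c (i + 1)) 1 (2 * k) * (oddProd (fun i => c (i + 1)) k)⁻¹ := by
  rw [← hc.shift.prod_conj_eq_prodAsc_mul_inv hkn]
  refine congrArg List.prod (List.map_congr_left fun j hj => ?_)
  have hj := List.mem_range.1 hj
  exact inv_mul_mul_eq_mul_mul_inv (hc.braid (2 * j + 2) (by omega) (by omega))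

theorem oddPowProd_succ_eq (hc : IsChain c n) {h : ℕ} (hn : 2 * h + 1 ≤ n) :
    oddPowProd c (h + 1) = phiOdd c h * oddProd c (h + 1) := by
  induction h with
  | zero => simp [oddPowProd, phiOdd_zero, oddProd, pow_two]
  | succ h ih =>
    have hu := fun j (hj : j ≤ h) => hc.commute_of_add_two_le (i := 2 * j + 1)
      (j := 2 * h + 3) (by omega) (by omega) (by omega)
    have hφ : Commute (c (2 * h + 3)) (phiOdd c h) := commute_phiOdd fun j hj => hu j (by omega)
    have hP : Commute (c (2 * h + 3)) (oddProd c (h + 1)) :=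
      commute_oddProd fun j hj => hu j (by omega)
    rw [oddPowProd, ih (by omega), phiOdd_succ, oddProd_succ c (h + 1),
      show 2 * (h + 1) + 1 = 2 * h + 3 by ring, pow_succ, ← mul_assoc, mul_assoc (phiOdd c h),
      ← (hP.pow_left _).eq, ← mul_assoc, ← (hφ.pow_left _).eq]
    group

theorem commute_dbar (hc : IsChain c n) {i m : ℕ} (hi : 1 ≤ i) (him : i + 3 ≤ m)
    (hmn : m ≤ n) :
    Commute (c m) (dbar c i) :=
  have h := hc.commute_of_add_two_le (i := i + 1) (by omega) (by omega) hmn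
  (h.inv_right.mul_right (hc.commute_of_add_two_le hi (by omega) hmn)).mul_right h

theorem prodDesc_add_two_sq (hc : IsChain c n) {k : ℕ} (hk : 1 ≤ k) (hkn : k + 2 ≤ n) :
    prodDesc c (k + 2) 1 ^ 2 = c (k + 1) * c (k + 2) * c k * c (k + 1) * prodDesc c k 1 ^ 2 := by
  obtain ⟨j, rfl⟩ : ∃ j, k = j + 1 := ⟨k - 1, by omega⟩
  have hab : c (j + 1) * c (j + 2) * c (j + 1) = c (j + 2) * c (j + 1) * c (j + 2) :=
    hc.braid (j + 1) (by omega) (by omega)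
  have hbt : c (j + 2) * c (j + 3) * c (j + 2) = c (j + 3) * c (j + 2) * c (j + 3) :=
    hc.braid (j + 2) (by omega) (by omega)
  have hw := semiconjBy_braid_left hab hbt
  have hb : Commute (c (j + 2)) (prodDesc c j 1) :=
    commute_prodDesc fun l hl hlj => hc.commute_of_add_two_le hl (by omega) (by omega)
  have hS : prodDesc c (j + 1) 1 * c (j + 2) =
      c (j + 1) * c (j + 2) * (c (j + 1))⁻¹ * prodDesc c (j + 1) 1 := by
    rw [prodDesc_succ c (by omega), mul_assoc, ← hb.eq]; group
  have ht : Commute (c (j + 3)) (prodDesc c (j + 1) 1) :=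
    commute_prodDesc fun l hl hlj => hc.commute_of_add_two_le hl (by omega) (by omega)
  rw [show j + 1 + 2 = j + 1 + 1 + 1 from rfl, prodDesc_succ c (by omega),
    prodDesc_succ c (by omega), pow_two, pow_two]
  set S := prodDesc c (j + 1) 1
  calc c (j + 3) * (c (j + 2) * S) * (c (j + 3) * (c (j + 2) * S))
      = c (j + 3) * c (j + 2) * (S * c (j + 3)) * c (j + 2) * S := by group
    _ = c (j + 3) * c (j + 2) * c (j + 3) * (S * c (j + 2)) * S := by rw [← ht.eq]; group
    _ = c (j + 2) * c (j + 3) * c (j + 1) * c (j + 2) * c (j + 1) * (c (j + 1))⁻¹ * (S * S) := by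
      rw [hS, hw.eq]; group
    _ = _ := by group

theorem pow_mul_prodDesc_dbar_mul_phiOdd {h : ℕ} (hc : IsChain c (2 * h + 1)) :
    c (2 * h + 1) ^ (2 * h + 2) * prodDesc (dbar c) (2 * h) 1 * phiOdd c h =
      oddPowProd c h * prodDesc c (2 * h + 1) 1 ^ 2 * c 1 := by
  induction h with
  | zero => simp [prodDesc, phiOdd_zero, oddPowProd, pow_succ]
  | succ h ih =>
    have IH := ih (hc.mono (by omega))
    have hD : prodDesc (dbar c) (2 * (h + 1)) 1 =
        (c (2 * h + 3))⁻¹ * c (2 * h + 2) * c (2 * h + 3) *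
          ((c (2 * h + 2))⁻¹ * c (2 * h + 1) * c (2 * h + 2)) * prodDesc (dbar c) (2 * h) 1 := by
      rw [show 2 * (h + 1) = 2 * h + 1 + 1 by ring, prodDesc_succ _ (by omega),
        prodDesc_succ _ (by omega), mul_assoc]
      rfl
    have hS : prodDesc c (2 * h + 3) 1 ^ 2 = c (2 * h + 2) * c (2 * h + 3) * c (2 * h + 1) *
        c (2 * h + 2) * prodDesc c (2 * h + 1) 1 ^ 2 :=
      hc.prodDesc_add_two_sq (k := 2 * h + 1) (by omega) (by omega)
    rw [hD, phiOdd_succ, show 2 * (h + 1) + 1 = 2 * h + 3 by ring, hS, oddPowProd]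
    set a := c (2 * h + 1)
    set b := c (2 * h + 2)
    set t := c (2 * h + 3)
    have hab : a * b * a = b * a * b := hc.braid (2 * h + 1) (by omega) (by omega)
    have hbt : b * t * b = t * b * t := hc.braid (2 * h + 2) (by omega) (by omega)
    have hat : Commute a t := hc.comm (2 * h + 1) (2 * h + 3) (by omega) (by omega) (by omega)
    have htD : Commute (t ^ (h + 2)) (prodDesc (dbar c) (2 * h) 1) :=
      (commute_prodDesc fun j hj hjh => hc.commute_dbar hj (by omega) (by omega)).pow_left _
    have hχ := fun m (hm : 2 * h + 1 ≤ m) (hmn : m ≤ 2 * h + 3) =>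
      (commute_oddPowProd (c := c) (k := h) fun j hj =>
        hc.commute_of_add_two_le (by omega) (by omega) hmn)
    have hwχ : Commute (a ^ (h + 2) * (b * t * a * b)) (oddPowProd c h) :=
      ((hχ _ le_rfl (by omega)).pow_left _).mul_left <|
        (((hχ (2 * h + 2) (by omega) (by omega)).mul_left (hχ _ (by omega) le_rfl)).mul_left
          (hχ _ le_rfl (by omega))).mul_left (hχ (2 * h + 2) (by omega) (by omega))
    calc t ^ (2 * (h + 1) + 2) * (t⁻¹ * b * t * (b⁻¹ * a * b) * prodDesc (dbar c) (2 * h) 1) *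
          (t ^ (h + 2) * phiOdd c h)
        = t ^ (2 * h + 2 + 2) * (t⁻¹ * b * t * (b⁻¹ * a * b)) *
            (prodDesc (dbar c) (2 * h) 1 * t ^ (h + 2)) * phiOdd c h := by group
      _ = t ^ (2 * h + 2 + 2) * (t⁻¹ * b * t * (b⁻¹ * a * b)) * t ^ (h + 2) *
            (a ^ (2 * h + 2))⁻¹ * (a ^ (2 * h + 2) * prodDesc (dbar c) (2 * h) 1 * phiOdd c h) := by
          rw [← htD.eq]; group
      _ = a ^ (h + 2) * (b * t * a * b) * oddPowProd c h *
            (prodDesc c (2 * h + 1) 1 ^ 2 * c 1) := by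
          rw [IH, pow_mul_conj_mul_conj_mul_pow hab hbt hat]; group
      _ = oddPowProd c h * a ^ (h + 2) *
            (b * t * a * b * prodDesc c (2 * h + 1) 1 ^ 2) * c 1 := by
          rw [hwχ.eq]; group

theorem commute_prodDesc_mul_prodAsc_succ (hc : IsChain c (n + 1))
    (hcentral : Commute (prodDesc c n 1 * prodAsc c 1 n) (c (n + 1))) {i : ℕ} (hi : 1 ≤ i)
    (hin : i ≤ n + 1) : Commute (prodDesc c (n + 1) 1 * prodAsc c 1 (n + 1)) (c i) := by
  rcases hin.lt_or_eq with hlt | rfl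
  · exact hc.commute_prodDesc_mul_prodAsc hi hlt
  · rw [prodDesc_mul_prodAsc_succ]
    exact ((Commute.refl _).mul_left hcentral).mul_left (Commute.refl _)

theorem prodDesc_dbar_mul_phiOdd_mul {g : ℕ} (hc : IsChain c (2 * g + 1)) (hg : 1 ≤ g)
    (hι : ∀ i, 1 ≤ i → i ≤ 2 * g + 1 →
      Commute (prodDesc c (2 * g + 1) 1 * prodAsc c 1 (2 * g + 1)) (c i))
    (hι2 : (prodDesc c (2 * g + 1) 1 * prodAsc c 1 (2 * g + 1)) ^ 2 = 1) :
    prodDesc (dbar c) (2 * g) 1 * phiOdd c g * prodAsc (fun i => c (i + 1)) 1 (2 * g) *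
        (oddProd (fun i => c (i + 1)) g)⁻¹ * prodAsc c 1 (2 * g) * c (2 * g + 1) ^ (3 * g + 4) =
      phiOdd c g := by
  have hkey := hc.pow_mul_prodDesc_dbar_mul_phiOdd
  set t := c (2 * g + 1)
  set S := prodDesc c (2 * g + 1) 1
  set A := prodAsc c 1 (2 * g + 1)
  set Q := oddProd (fun i => c (i + 1)) g
  have hφ : phiOdd c g = t ^ (g + 1) * phiOdd c (g - 1) := by
    conv_lhs => rw [← Nat.sub_add_cancel hg, phiOdd_succ]
    rw [show 2 * (g - 1) + 3 = 2 * g + 1 by omega, show g - 1 + 2 = g + 1 by omega]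
  have hχ : oddPowProd c g = phiOdd c (g - 1) * oddProd c g := by
    have := hc.oddPowProd_succ_eq (h := g - 1) (by omega)
    rwa [Nat.sub_add_cancel hg] at this
  have htφ : Commute t (phiOdd c (g - 1)) :=
    commute_phiOdd fun j hj => hc.commute_of_add_two_le (by omega) (by omega) le_rfl
  have hA : c 1 * prodAsc (fun i => c (i + 1)) 1 (2 * g) = A := (prodAsc_one_succ c _).symm
  have hA' : prodAsc c 1 (2 * g) * t = A := (prodAsc_succ c (by omega)).symm
  have hSQ : S * Q⁻¹ = (oddProd c g)⁻¹ * S := (hc.semiconjBy_oddProd (by omega)).inv_right.eq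
  have hιY : Commute (S * A) (Q⁻¹ * prodAsc c 1 (2 * g) * t ^ (3 * g + 4)) :=
    (((commute_oddProd fun j hj => hι (2 * j + 2) (by omega) (by omega)).inv_right).mul_right
      (commute_prodAsc fun j hj hj' => hι j hj (by omega))).mul_right
      ((hι _ (by omega) le_rfl).pow_right _)
  have hιt : Commute (S * A) (t ^ (3 * g + 3)) := (hι _ (by omega) le_rfl).pow_right _
  refine mul_left_cancel (a := t ^ (2 * g + 2)) ?_
  calc t ^ (2 * g + 2) * (prodDesc (dbar c) (2 * g) 1 * phiOdd c g *
        prodAsc (fun i => c (i + 1)) 1 (2 * g) * Q⁻¹ * prodAsc c 1 (2 * g) * t ^ (3 * g + 4))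
      = t ^ (2 * g + 2) * prodDesc (dbar c) (2 * g) 1 * phiOdd c g *
          prodAsc (fun i => c (i + 1)) 1 (2 * g) *
            (Q⁻¹ * prodAsc c 1 (2 * g) * t ^ (3 * g + 4)) := by
        group
    _ = oddPowProd c g * S * (S * A) * (Q⁻¹ * prodAsc c 1 (2 * g) * t ^ (3 * g + 4)) := by
        rw [hkey, pow_two, ← hA]; group
    _ = oddPowProd c g * (S * Q⁻¹) * (prodAsc c 1 (2 * g) * t) * t ^ (3 * g + 3) * (S * A) := by
        rw [mul_assoc _ (S * A), hιY.eq]; group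
    _ = oddPowProd c g * (oddProd c g)⁻¹ * (S * A) * t ^ (3 * g + 3) * (S * A) := by
        rw [hSQ, hA']; group
    _ = oddPowProd c g * (oddProd c g)⁻¹ * t ^ (3 * g + 3) * (S * A) ^ 2 := by
        rw [mul_assoc _ (S * A), hιt.eq, pow_two]; group
    _ = phiOdd c (g - 1) * t ^ (3 * g + 3) := by rw [hι2, hχ]; group
    _ = t ^ (2 * g + 2) * phiOdd c g := by rw [hφ, ← (htφ.pow_left _).eq]; group

end IsChain

end HyperellipticDaisy

open HyperellipticDaisy

/-- the positive relator `H(g,1)` of Theorem 5.1: with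
`d̄ i = (c (i+1))⁻¹ * c i * c (i+1)`, `e (i+1) = c i * c (i+1) * (c i)⁻¹`,
`φ = c (2g+1)^{g+1} c (2g-1)^{g} ⋯ c 3 ^ 2 c 1`, assuming the braid relations,
the hyperelliptic relation, the centrality of `c (2g) ⋯ c 1 c 1 ⋯ c (2g)` relative to
`c (2g+1)`, and the daisy relation, one has
`(φ⁻¹ d̄ (2g) φ) ⋯ (φ⁻¹ d̄ 1 φ) · d̄ 2 d̄ 4 ⋯ d̄ (2g) · e 2 e 4 ⋯ e (2g) ·
x 1 ⋯ x g · c (2g+1)^{2g+6} = 1`. -/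
theorem statement16 {G : Type*} [Group G] (g : ℕ) (hg : 3 ≤ g) (c x : ℕ → G)
    (hbraid : ∀ i, 1 ≤ i → i + 1 ≤ 2 * g + 1 →
      c i * c (i + 1) * c i = c (i + 1) * c i * c (i + 1))
    (hcomm : ∀ i j, 1 ≤ i → j ≤ 2 * g + 1 → i + 2 ≤ j → c i * c j = c j * c i)
    (hhyper : (prodAsc c 1 (2 * g) * (c (2 * g + 1)) ^ 2 * prodDesc c (2 * g) 1) ^ 2 = 1)
    (hcentral : Commute (prodDesc c (2 * g) 1 * prodAsc c 1 (2 * g)) (c (2 * g + 1)))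
    (hdaisy : ((List.range g).map fun j => x (j + 1)).prod =
      ((List.range g).map fun j => c (2 * j + 1)).prod * (c (2 * g + 1)) ^ (g - 2)) :
    (((List.range (2 * g)).map fun j =>
        (phiOdd c g)⁻¹ *
          ((c (2 * g - j + 1))⁻¹ * c (2 * g - j) * c (2 * g - j + 1)) *
          phiOdd c g).prod) *
      (((List.range g).map fun j =>
        (c (2 * j + 3))⁻¹ * c (2 * j + 2) * c (2 * j + 3)).prod) *
      (((List.range g).map fun j =>
        c (2 * j + 1) * c (2 * j + 2) * (c (2 * j + 1))⁻¹).prod) *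
      (((List.range g).map fun j => x (j + 1)).prod) *
      (c (2 * g + 1)) ^ (2 * g + 6) = 1 := by
  have hc : IsChain c (2 * g + 1) := ⟨hbraid, hcomm⟩
  have hD : ((List.range (2 * g)).map fun j =>
      (c (2 * g - j + 1))⁻¹ * c (2 * g - j) * c (2 * g - j + 1)).prod =
      prodDesc (dbar c) (2 * g) 1 := by rw [prodDesc_one_eq]; rfl
  have hX : ((List.range g).map fun j => x (j + 1)).prod = oddProd c g * c (2 * g + 1) ^ (g - 2) :=
    hdaisy
  have hmain := hc.prodDesc_dbar_mul_phiOdd_mul (by omega)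
    (fun i => hc.commute_prodDesc_mul_prodAsc_succ hcentral) (sq_prodDesc_mul_prodAsc_succ c hhyper)
  rw [prod_map_conj, hD, hc.prod_dbar_eq_prodAsc_mul_inv le_rfl,
    hc.prod_conj_eq_prodAsc_mul_inv (by omega), hX]
  calc _ = (phiOdd c g)⁻¹ * (prodDesc (dbar c) (2 * g) 1 * phiOdd c g *
          prodAsc (fun i => c (i + 1)) 1 (2 * g) * (oddProd (fun i => c (i + 1)) g)⁻¹ *
          prodAsc c 1 (2 * g) * (c (2 * g + 1) ^ (g - 2) * c (2 * g + 1) ^ (2 * g + 6))) := by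
        group
    _ = 1 := by rw [← pow_add, show g - 2 + (2 * g + 6) = 3 * g + 4 by omega, hmain]; group
end

section
/- Let $g \ge 3$ and let $G$ be a group containing elements $c_1,\dots,c_{2g+1}$ and $x_1,\dots,x_g$. Set $d_i = c_{i+1} c_i c_{i+1}^{-1}$, $\bar d_i = c_{i+1}^{-1} c_i c_{i+1}$, $e_{i+1} = c_i c_{i+1} c_i^{-1}$, $\bar e_{i+1} = c_i^{-1} c_{i+1} c_i$, and $\varphi = c_{2g+1}^{g+1} c_{2g-1}^{g} \cdots c_5^{3} c_3^{2} c_1$. Assume: (i) $c_1,\dots,c_{2g+1}$ satisfy the braid relations; (ii) the hyperelliptic relation $(c_1 c_2 \cdots c_{2g-1} c_{2g} c_{2g+1}^2 c_{2g} c_{2g-1} \cdots c_2 c_1)^2 = 1$ holds; (iii) the element $c_{2g} c_{2g-1} \cdots c_2 c_1 c_1 c_2 \cdots c_{2g-1} c_{2g}$ commutes with $c_{2g+1}$; (iv) the daisy relation $x_1 x_2 \cdots x_g = c_1 c_3 c_5 \cdots c_{2g-1} \cdot c_{2g+1}^{g-2}$ holds. Then $(\varphi^{-2} \bar e_{2g}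 \varphi^{2})(\varphi^{-2} \bar e_{2g-2} \varphi^{2}) \cdots (\varphi^{-2} \bar e_4 \varphi^{2})(\varphi^{-2} \bar e_2 \varphi^{2}) \cdot (\varphi^{-2} d_{2g} \varphi^{2})(\varphi^{-2} d_{2g-2} \varphi^{2}) \cdots (\varphi^{-2} d_4 \varphi^{2})(\varphi^{-2} d_2 \varphi^{2}) \cdot \bar d_2 \bar d_4 \cdots \bar d_{2g} \cdot e_2 e_4 \cdots e_{2g} \cdot (x_1 x_2 \cdots x_g)^2 \cdot c_{2g+1}^{8} = 1$. -/
namespace HyperellipticChain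

variable {G : Type*} [Group G]

section ProdRange

lemma prod_range_congr {f f' : ℕ → G} {n : ℕ} (h : ∀ j < n, f j = f' j) :
    ((List.range n).map f).prod = ((List.range n).map f').prod := by
  rw [List.map_congr_left fun j hj => h j (List.mem_range.1 hj)]

lemma commute_prod_range {x : G} {f : ℕ → G} {n : ℕ} (h : ∀ j < n, Commute x (f j)) :
    Commute x ((List.range n).map f).prod :=
  Commute.list_prod_right _ _ (by simpa using h)

lemma semiconjBy_prod_range {x : G} {f f' : ℕ → G} {n : ℕ}
    (h : ∀ j < n, SemiconjBy x (f j) (f' j)) :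
    SemiconjBy x ((List.range n).map f).prod ((List.range n).map f').prod := by
  induction n with
  | zero => exact SemiconjBy.one_right x
  | succ n ih =>
    simp only [List.prod_range_succ]
    exact (ih fun j hj => h j (by omega)).mul_right (h n (by omega))

lemma prod_range_conj (x : G) (f : ℕ → G) (n : ℕ) :
    ((List.range n).map fun j => x⁻¹ * f j * x).prod = x⁻¹ * ((List.range n).map f).prod * x := by
  have h : SemiconjBy x ((List.range n).map fun j => x⁻¹ * f j * x).prod
      ((List.range n).map f).prod :=
    semiconjBy_prod_range fun j _ => by simp [SemiconjBy, mul_assoc]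
  rw [mul_assoc, eq_inv_mul_iff_mul_eq]
  exact h

lemma prod_range_reverse_of_commute {f : ℕ → G} {n : ℕ}
    (hf : ∀ i < n, ∀ j < n, Commute (f i) (f j)) :
    ((List.range n).map fun j => f (n - 1 - j)).prod = ((List.range n).map f).prod := by
  have hrev : ((List.range n).map fun j => f (n - 1 - j)) = ((List.range n).map f).reverse := by
    rw [← List.map_reverse, List.range_eq_range', List.reverse_range', List.map_map]
    simp [Function.comp_def, List.range_eq_range']
  rw [hrev]
  refine (List.reverse_perm _).prod_eq' (List.pairwise_of_forall_mem_list ?_)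
  simp only [List.mem_reverse, List.mem_map, List.mem_range]
  rintro _ ⟨i, hi, rfl⟩ _ ⟨j, hj, rfl⟩
  exact hf i hi j hj

end ProdRange

section ZpowProd

def zpowProd (a : ℕ → G) (n : ℕ) (e : ℕ → ℤ) : G :=
  ((List.range n).map fun j => a j ^ e j).prod

variable {a : ℕ → G} {n : ℕ}

lemma zpowProd_succ (e : ℕ → ℤ) : zpowProd a (n + 1) e = zpowProd a n e * a n ^ e n :=
  List.prod_range_succ _ _

lemma zpowProd_congr {e f : ℕ → ℤ} (h : ∀ j < n, e j = f j) : zpowProd a n e = zpowProd a n f :=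
  prod_range_congr fun j hj => by rw [h j hj]

lemma zpowProd_zero : zpowProd a n (fun _ => 0) = 1 := by
  simp [zpowProd]

lemma zpowProd_mul_zpow (e : ℕ → ℤ) (k : ℤ) :
    zpowProd a n e * a n ^ k = zpowProd a (n + 1) (fun j => if j < n then e j else k) := by
  rw [zpowProd_succ, if_neg (lt_irrefl n)]
  exact congrArg (· * _) (zpowProd_congr fun j hj => (if_pos hj).symm)

lemma zpowProd_mul (ha : ∀ i < n, ∀ j < n, Commute (a i) (a j)) (e f : ℕ → ℤ) :
    zpowProd a n e * zpowProd a n f = zpowProd a n (e + f) := by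
  induction n with
  | zero => simp [zpowProd]
  | succ n ih =>
    have hlast : Commute (a n ^ e n) (zpowProd a n f) :=
      commute_prod_range fun j hj => (ha n (by omega) j (by omega)).zpow_zpow _ _
    rw [zpowProd_succ, zpowProd_succ, zpowProd_succ,
      ← ih fun i hi j hj => ha i (by omega) j (by omega), Pi.add_apply, zpow_add]
    calc zpowProd a n e * a n ^ e n * (zpowProd a n f * a n ^ f n)
        = zpowProd a n e * (a n ^ e n * zpowProd a n f) * a n ^ f n := by group
      _ = zpowProd a n e * zpowProd a n f * (a n ^ e n * a n ^ f n) := by rw [hlast.eq]; group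

lemma zpowProd_inv (ha : ∀ i < n, ∀ j < n, Commute (a i) (a j)) (e : ℕ → ℤ) :
    (zpowProd a n e)⁻¹ = zpowProd a n (-e) :=
  (eq_inv_of_mul_eq_one_right (by rw [zpowProd_mul ha, add_neg_cancel]; exact zpowProd_zero)).symm

lemma semiconjBy_zpowProd_shift {x : G} {m : ℕ} (hx : ∀ j < m, SemiconjBy x (a j) (a (j + 1)))
    {e e' : ℕ → ℤ} (he : e m = 0) (he'0 : e' 0 = 0) (he' : ∀ j < m, e' (j + 1) = e j) :
    SemiconjBy x (zpowProd a (m + 1) e) (zpowProd a (m + 1) e') := by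
  have hsrc : zpowProd a (m + 1) e = zpowProd a m e := by rw [zpowProd_succ, he, zpow_zero, mul_one]
  have htgt : zpowProd a (m + 1) e' = ((List.range m).map fun j => a (j + 1) ^ e j).prod := by
    rw [zpowProd, List.prod_range_succ', he'0, zpow_zero, one_mul]
    exact prod_range_congr fun j hj => by rw [he' j hj]
  rw [hsrc, htgt]
  exact semiconjBy_prod_range fun j hj => (hx j hj).zpow_right _

end ZpowProd

section Chain

lemma prodAsc_succ (a : ℕ → G) {m k : ℕ} (h : m ≤ k + 1) :
    prodAsc a m (k + 1) = prodAsc a m k * a (k + 1) := by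
  rw [prodAsc, prodAsc, show k + 1 + 1 - m = k + 1 - m + 1 by omega, List.prod_range_succ,
    show m + (k + 1 - m) = k + 1 by omega]

lemma prodDesc_succ (a : ℕ → G) {m k : ℕ} (h : m ≤ k + 1) :
    prodDesc a (k + 1) m = a (k + 1) * prodDesc a k m := by
  rw [prodDesc, prodDesc, show k + 1 + 1 - m = k + 1 - m + 1 by omega, List.prod_range_succ',
    Nat.sub_zero]
  exact congrArg _ (prod_range_congr fun j _ => by rw [Nat.add_sub_add_right])

lemma prodAsc_add_two (a : ℕ → G) (k : ℕ) :
    prodAsc a 1 (k + 2) = prodAsc a 1 k * a (k + 1) * a (k + 2) := by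
  rw [prodAsc_succ a (by omega), prodAsc_succ a (by omega)]

lemma prodDesc_add_two (a : ℕ → G) (k : ℕ) :
    prodDesc a (k + 2) 1 = a (k + 2) * a (k + 1) * prodDesc a k 1 := by
  rw [prodDesc_succ a (by omega), prodDesc_succ a (by omega), mul_assoc]

def FarCommute (c : ℕ → G) (n : ℕ) : Prop :=
  ∀ i j, 1 ≤ i → j ≤ n → i + 2 ≤ j → Commute (c i) (c j)

structure IsBraidChain (c : ℕ → G) (n : ℕ) : Prop where
  braid : ∀ i, 1 ≤ i → i + 1 ≤ n → c i * c (i + 1) * c i = c (i + 1) * c i * c (i + 1)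
  farCommute : FarCommute c n

variable {c : ℕ → G} {n : ℕ}

namespace FarCommute

lemma commute_odd (hc : FarCommute c n) {i j : ℕ} (hi : 2 * i + 1 ≤ n) (hj : 2 * j + 1 ≤ n) :
    Commute (c (2 * i + 1)) (c (2 * j + 1)) := by
  rcases lt_trichotomy i j with h | rfl | h
  · exact hc _ _ (by omega) hj (by omega)
  · exact Commute.refl _
  · exact (hc _ _ (by omega) hi (by omega)).symm

lemma commute_prodAsc (hc : FarCommute c n) {a k : ℕ} (hk : k + 2 ≤ a) (ha : a ≤ n) :
    Commute (c a) (prodAsc c 1 k) :=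
  commute_prod_range fun j hj => (hc _ _ (by omega) ha (by omega)).symm

lemma commute_prodDesc (hc : FarCommute c n) {a k : ℕ} (hk : k + 2 ≤ a) (ha : a ≤ n) :
    Commute (c a) (prodDesc c k 1) :=
  commute_prod_range fun j hj => (hc _ _ (by omega) ha (by omega)).symm

end FarCommute

namespace IsBraidChain

lemma semiconjBy_prodAsc (hc : IsBraidChain c n) {i k : ℕ} (hi : 1 ≤ i) (hik : i + 1 ≤ k)
    (hk : k ≤ n) : SemiconjBy (prodAsc c 1 k) (c i) (c (i + 1)) := by
  induction k with
  | zero => omega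
  | succ k ih =>
    rw [prodAsc_succ c (by omega)]
    rcases Nat.lt_or_ge (i + 1) (k + 1) with hlt | hge
    · exact (ih (by omega) (by omega)).mul_left (hc.farCommute i (k + 1) hi hk (by omega)).symm
    · obtain rfl : i = k := by omega
      obtain ⟨m, rfl⟩ : ∃ m, i = m + 1 := ⟨i - 1, by omega⟩
      have hbraid : SemiconjBy (c (m + 1) * c (m + 2)) (c (m + 1)) (c (m + 2)) := by
        simpa [SemiconjBy, mul_assoc] using hc.braid (m + 1) hi (by omega)
      rw [prodAsc_succ c (by omega), mul_assoc]
      exact SemiconjBy.mul_left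
        (hc.farCommute.commute_prodAsc (a := m + 2) (by omega) (by omega)).symm
        hbraid

lemma semiconjBy_prodDesc (hc : IsBraidChain c n) {i k : ℕ} (hi : 1 ≤ i) (hik : i + 1 ≤ k)
    (hk : k ≤ n) : SemiconjBy (prodDesc c k 1) (c (i + 1)) (c i) := by
  induction k with
  | zero => omega
  | succ k ih =>
    rw [prodDesc_succ c (by omega)]
    rcases Nat.lt_or_ge (i + 1) (k + 1) with hlt | hge
    · exact SemiconjBy.mul_left (hc.farCommute i (k + 1) hi hk (by omega)).symm
        (ih (by omega) (by omega))
    · obtain rfl : i = k := by omega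
      obtain ⟨m, rfl⟩ : ∃ m, i = m + 1 := ⟨i - 1, by omega⟩
      have hbraid : SemiconjBy (c (m + 2) * c (m + 1)) (c (m + 2)) (c (m + 1)) := by
        simpa [SemiconjBy, mul_assoc] using (hc.braid (m + 1) hi (by omega)).symm
      rw [prodDesc_succ c (by omega), ← mul_assoc]
      exact hbraid.mul_left
        (hc.farCommute.commute_prodDesc (a := m + 2) (by omega) (by omega)).symm

lemma semiconjBy_prodAsc_sq (hc : IsBraidChain c n) {i : ℕ} (hi : 1 ≤ i) (hin : i + 2 ≤ n) :
    SemiconjBy (prodAsc c 1 n ^ 2) (c i) (c (i + 2)) := by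
  rw [sq]
  exact (hc.semiconjBy_prodAsc (i := i + 1) (by omega) (by omega) le_rfl).mul_left
    (hc.semiconjBy_prodAsc hi (by omega) le_rfl)

lemma commute_prodDesc_mul_prodAsc {k : ℕ} (hc : IsBraidChain c (k + 1))
    (hcentral : Commute (prodDesc c k 1 * prodAsc c 1 k) (c (k + 1))) {i : ℕ} (hi : 1 ≤ i)
    (hik : i ≤ k + 1) : Commute (prodDesc c (k + 1) 1 * prodAsc c 1 (k + 1)) (c i) := by
  rcases Nat.lt_or_ge i (k + 1) with hlt | hge
  · exact (hc.semiconjBy_prodDesc hi (by omega) le_rfl).mul_left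
      (hc.semiconjBy_prodAsc hi (by omega) le_rfl)
  · obtain rfl : i = k + 1 := by omega
    rw [prodDesc_succ c (by omega), prodAsc_succ c (by omega), mul_assoc,
      ← mul_assoc (prodDesc _ _ _)]
    exact (Commute.refl _).mul_left (hcentral.mul_left (Commute.refl _))

-- `L R` commutes with each `c i` (braid relations for `i ≤ k`, centrality for `i = k + 1`), hence
-- with `R`, so `L² R² = (L R)² = L (R L)² L⁻¹`.
lemma prodDesc_sq_mul_prodAsc_sq {k : ℕ} (hc : IsBraidChain c (k + 1))
    (hhyper : (prodAsc c 1 k * c (k + 1) ^ 2 * prodDesc c k 1) ^ 2 = 1)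
    (hcentral : Commute (prodDesc c k 1 * prodAsc c 1 k) (c (k + 1))) :
    prodDesc c (k + 1) 1 ^ 2 * prodAsc c 1 (k + 1) ^ 2 = 1 := by
  have hRL : prodAsc c 1 (k + 1) * prodDesc c (k + 1) 1
      = prodAsc c 1 k * c (k + 1) ^ 2 * prodDesc c k 1 := by
    rw [prodAsc_succ c (by omega), prodDesc_succ c (by omega), sq]
    group
  have hLR : Commute (prodDesc c (k + 1) 1 * prodAsc c 1 (k + 1)) (prodAsc c 1 (k + 1)) :=
    commute_prod_range fun j hj => hc.commute_prodDesc_mul_prodAsc hcentral (by omega) (by omega)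
  calc prodDesc c (k + 1) 1 ^ 2 * prodAsc c 1 (k + 1) ^ 2
      = prodDesc c (k + 1) 1
          * (prodDesc c (k + 1) 1 * prodAsc c 1 (k + 1) * prodAsc c 1 (k + 1)) := by
        simp only [sq]; group
    _ = prodDesc c (k + 1) 1 * (prodAsc c 1 (k + 1) * prodDesc c (k + 1) 1) ^ 2
          * (prodDesc c (k + 1) 1)⁻¹ := by
        rw [sq, hLR.eq]; group
    _ = 1 := by rw [hRL, hhyper]; group

end IsBraidChain

end Chain

section Factorization

-- The paper's `d_i, d̄_i, e_i, ē_i`, with its indexing: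
-- `conjE c (i + 1) = c i * c (i + 1) * (c i)⁻¹`.

def conjD (c : ℕ → G) (i : ℕ) : G := c (i + 1) * c i * (c (i + 1))⁻¹

def conjDBar (c : ℕ → G) (i : ℕ) : G := (c (i + 1))⁻¹ * c i * c (i + 1)

def conjE (c : ℕ → G) (i : ℕ) : G := c (i - 1) * c i * (c (i - 1))⁻¹

def conjEBar (c : ℕ → G) (i : ℕ) : G := (c (i - 1))⁻¹ * c i * c (i - 1)

def oddProd (c : ℕ → G) (h : ℕ) : G := ((List.range h).map fun j => c (2 * j + 1)).prod

def prodConjD (c : ℕ → G) (h : ℕ) : G :=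
  ((List.range h).map fun j => conjD c (2 * h - 2 * j)).prod

def prodConjEBar (c : ℕ → G) (h : ℕ) : G :=
  ((List.range h).map fun j => conjEBar c (2 * h - 2 * j)).prod

def prodConjDBar (c : ℕ → G) (h : ℕ) : G :=
  ((List.range h).map fun j => conjDBar c (2 * j + 2)).prod

def prodConjE (c : ℕ → G) (h : ℕ) : G :=
  ((List.range h).map fun j => conjE c (2 * j + 2)).prod

lemma oddProd_succ (c : ℕ → G) (h : ℕ) : oddProd c (h + 1) = oddProd c h * c (2 * h + 1) :=
  List.prod_range_succ _ _

lemma prodConjD_succ (c : ℕ → G) (h : ℕ) :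
    prodConjD c (h + 1) = conjD c (2 * h + 2) * prodConjD c h := by
  rw [prodConjD, List.prod_range_succ', show 2 * (h + 1) - 2 * 0 = 2 * h + 2 by omega]
  exact congrArg _ (prod_range_congr fun j _ => by
    rw [show 2 * (h + 1) - 2 * (j + 1) = 2 * h - 2 * j by omega])

lemma prodConjEBar_succ (c : ℕ → G) (h : ℕ) :
    prodConjEBar c (h + 1) = conjEBar c (2 * h + 2) * prodConjEBar c h := by
  rw [prodConjEBar, List.prod_range_succ', show 2 * (h + 1) - 2 * 0 = 2 * h + 2 by omega]
  exact congrArg _ (prod_range_congr fun j _ => by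
    rw [show 2 * (h + 1) - 2 * (j + 1) = 2 * h - 2 * j by omega])

lemma prodConjDBar_succ (c : ℕ → G) (h : ℕ) :
    prodConjDBar c (h + 1) = prodConjDBar c h * conjDBar c (2 * h + 2) :=
  List.prod_range_succ _ _

lemma prodConjE_succ (c : ℕ → G) (h : ℕ) :
    prodConjE c (h + 1) = prodConjE c h * conjE c (2 * h + 2) :=
  List.prod_range_succ _ _

variable {c : ℕ → G} {n : ℕ}

lemma FarCommute.commute_oddProd (hc : FarCommute c n) {a h : ℕ} (hh : 2 * h + 1 ≤ a)
    (ha : a ≤ n) : Commute (c a) (oddProd c h) :=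
  commute_prod_range fun j hj => (hc _ _ (by omega) ha (by omega)).symm

namespace FarCommute

variable (hc : FarCommute c n)
include hc

lemma prodDesc_eq_prodConjD_mul_oddProd {h : ℕ} (hh : 2 * h + 1 ≤ n) :
    prodDesc c (2 * h + 1) 1 = prodConjD c h * oddProd c (h + 1) := by
  induction h with
  | zero => simp [prodDesc, prodConjD, oddProd]
  | succ h ih =>
    have hL := ih (by omega)
    have hcomm : Commute (c (2 * h + 3)) (prodDesc c (2 * h + 1) 1) :=
      hc.commute_prodDesc (by omega) hh
    rw [show 2 * (h + 1) + 1 = 2 * h + 1 + 2 by ring, prodDesc_add_two, prodConjD_succ,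
      oddProd_succ c (h + 1)]
    show c (2 * h + 3) * c (2 * h + 2) * prodDesc c (2 * h + 1) 1
      = c (2 * h + 3) * c (2 * h + 2) * (c (2 * h + 3))⁻¹ * prodConjD c h
        * (oddProd c (h + 1) * c (2 * h + 3))
    calc c (2 * h + 3) * c (2 * h + 2) * prodDesc c (2 * h + 1) 1
        = c (2 * h + 3) * c (2 * h + 2) * (c (2 * h + 3))⁻¹
          * (c (2 * h + 3) * prodDesc c (2 * h + 1) 1) := by group
      _ = _ := by rw [hcomm.eq, hL]; group

lemma prodDesc_eq_oddProd_mul_prodConjEBar {h : ℕ} (hh : 2 * h + 1 ≤ n) :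
    prodDesc c (2 * h + 1) 1 = oddProd c (h + 1) * prodConjEBar c h := by
  induction h with
  | zero => simp [prodDesc, prodConjEBar, oddProd]
  | succ h ih =>
    have hL := ih (by omega)
    have h3 : Commute (c (2 * h + 3)) (oddProd c h) := hc.commute_oddProd (by omega) hh
    have h2 : Commute (c (2 * h + 2)) (oddProd c h) := hc.commute_oddProd (by omega) (by omega)
    have h13 : Commute (c (2 * h + 1)) (c (2 * h + 3)) := hc _ _ (by omega) hh (by omega)
    rw [show 2 * (h + 1) + 1 = 2 * h + 1 + 2 by ring, prodDesc_add_two, prodConjEBar_succ,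
      oddProd_succ c (h + 1), hL, oddProd_succ]
    show c (2 * h + 3) * c (2 * h + 2) * (oddProd c h * c (2 * h + 1) * prodConjEBar c h)
      = oddProd c h * c (2 * h + 1) * c (2 * h + 3)
        * ((c (2 * h + 1))⁻¹ * c (2 * h + 2) * c (2 * h + 1) * prodConjEBar c h)
    calc c (2 * h + 3) * c (2 * h + 2) * (oddProd c h * c (2 * h + 1) * prodConjEBar c h)
        = c (2 * h + 3) * c (2 * h + 2) * oddProd c h * c (2 * h + 1) * prodConjEBar c h := by
          group
      _ = oddProd c h * (c (2 * h + 3) * c (2 * h + 1))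
          * ((c (2 * h + 1))⁻¹ * c (2 * h + 2) * c (2 * h + 1) * prodConjEBar c h) := by
          rw [(h3.mul_left h2).eq]; group
      _ = _ := by rw [← h13.eq]; group

lemma prodAsc_eq_oddProd_mul_prodConjDBar {h : ℕ} (hh : 2 * h + 1 ≤ n) :
    prodAsc c 1 (2 * h + 1) = oddProd c (h + 1) * prodConjDBar c h := by
  induction h with
  | zero => simp [prodAsc, prodConjDBar, oddProd]
  | succ h ih =>
    have hR := ih (by omega)
    have h3D : Commute (c (2 * h + 3)) (prodConjDBar c h) := by
      have h3 :=
        (hc.commute_oddProd (a := 2 * h + 3) (h := h + 1) (by omega) hh).inv_right.mul_right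
        (hc.commute_prodAsc (a := 2 * h + 3) (k := 2 * h + 1) (by omega) hh)
      rwa [hR, inv_mul_cancel_left] at h3
    rw [show 2 * (h + 1) + 1 = 2 * h + 1 + 2 by ring, prodAsc_add_two, prodConjDBar_succ,
      oddProd_succ c (h + 1), hR]
    show oddProd c (h + 1) * prodConjDBar c h * c (2 * h + 2) * c (2 * h + 3)
      = oddProd c (h + 1) * c (2 * h + 3)
        * (prodConjDBar c h * ((c (2 * h + 3))⁻¹ * c (2 * h + 2) * c (2 * h + 3)))
    calc oddProd c (h + 1) * prodConjDBar c h * c (2 * h + 2) * c (2 * h + 3)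
        = oddProd c (h + 1) * (prodConjDBar c h * c (2 * h + 3))
          * ((c (2 * h + 3))⁻¹ * c (2 * h + 2) * c (2 * h + 3)) := by group
      _ = _ := by rw [← h3D.eq]; group

lemma prodAsc_eq_prodConjE_mul_oddProd {h : ℕ} (hh : 2 * h + 1 ≤ n) :
    prodAsc c 1 (2 * h + 1) = prodConjE c h * oddProd c (h + 1) := by
  induction h with
  | zero => simp [prodAsc, prodConjE, oddProd]
  | succ h ih =>
    have hR := ih (by omega)
    have h1 : Commute (c (2 * h + 1)) (oddProd c h) := hc.commute_oddProd le_rfl (by omega)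
    have h2 : Commute (c (2 * h + 2)) (oddProd c h) := hc.commute_oddProd (by omega) (by omega)
    rw [show 2 * (h + 1) + 1 = 2 * h + 1 + 2 by ring, prodAsc_add_two, prodConjE_succ,
      oddProd_succ c (h + 1), hR, oddProd_succ]
    show prodConjE c h * (oddProd c h * c (2 * h + 1)) * c (2 * h + 2) * c (2 * h + 3)
      = prodConjE c h * (c (2 * h + 1) * c (2 * h + 2) * (c (2 * h + 1))⁻¹)
        * (oddProd c h * c (2 * h + 1) * c (2 * h + 3))
    calc prodConjE c h * (oddProd c h * c (2 * h + 1)) * c (2 * h + 2) * c (2 * h + 3)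
        = prodConjE c h * (oddProd c h * (c (2 * h + 1) * c (2 * h + 2))) * c (2 * h + 3) := by
          group
      _ = prodConjE c h * (c (2 * h + 1) * c (2 * h + 2) * (c (2 * h + 1))⁻¹)
          * (c (2 * h + 1) * oddProd c h) * c (2 * h + 3) := by
          rw [← (h1.mul_left h2).eq]; group
      _ = _ := by rw [h1.eq]; group

end FarCommute

end Factorization

section OddMonomials

lemma oddProd_eq_zpowProd (c : ℕ → G) (h : ℕ) :
    oddProd c h = zpowProd (fun j => c (2 * j + 1)) h 1 :=
  prod_range_congr fun _ _ => (zpow_one _).symm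

variable {c : ℕ → G}

lemma phiOdd_eq_zpowProd {l : ℕ}
    (hodd : ∀ i < l + 1, ∀ j < l + 1, Commute (c (2 * i + 1)) (c (2 * j + 1))) :
    phiOdd c l = zpowProd (fun j => c (2 * j + 1)) (l + 1) (fun j => j + 1) := by
  rw [zpowProd, ← prod_range_reverse_of_commute fun i hi j hj => (hodd i hi j hj).zpow_zpow _ _]
  refine prod_range_congr fun j hj => ?_
  rw [show l + 1 - 1 - j = l - j by omega, ← zpow_natCast]
  push_cast
  rfl

lemma daisy_sq_mul_pow_eight_eq_zpowProd {g : ℕ} (hg : 2 ≤ g)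
    (hodd : ∀ i < g + 1, ∀ j < g + 1, Commute (c (2 * i + 1)) (c (2 * j + 1))) :
    (oddProd c g * c (2 * g + 1) ^ (g - 2)) ^ 2 * c (2 * g + 1) ^ 8
      = zpowProd (fun j => c (2 * j + 1)) (g + 1) fun j => if j < g then 2 else 2 * g + 4 := by
  have hdaisy : oddProd c g * c (2 * g + 1) ^ (g - 2)
      = zpowProd (fun j => c (2 * j + 1)) (g + 1)
          fun j => if j < g then 1 else ((g - 2 : ℕ) : ℤ) := by
    rw [← zpowProd_mul_zpow, zpow_natCast]
    exact congrArg (· * _) (oddProd_eq_zpowProd c g)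
  have h8 : c (2 * g + 1) ^ 8
      = zpowProd (fun j => c (2 * j + 1)) (g + 1) fun j => if j < g then 0 else 8 := by
    rw [← zpowProd_mul_zpow, zpowProd_zero, one_mul]
    exact (zpow_ofNat _ 8).symm
  rw [hdaisy, h8, sq, zpowProd_mul hodd, zpowProd_mul hodd]
  exact zpowProd_congr fun j _ => by simp only [Pi.add_apply]; split_ifs <;> omega

lemma IsBraidChain.conj_products_eq_zpowProd {g : ℕ} (hc : IsBraidChain c (2 * g + 1))
    (hhyper : (prodAsc c 1 (2 * g) * c (2 * g + 1) ^ 2 * prodDesc c (2 * g) 1) ^ 2 = 1)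
    (hcentral : Commute (prodDesc c (2 * g) 1 * prodAsc c 1 (2 * g)) (c (2 * g + 1))) :
    ((phiOdd c g ^ 2)⁻¹ * prodConjEBar c g * phiOdd c g ^ 2) *
      ((phiOdd c g ^ 2)⁻¹ * prodConjD c g * phiOdd c g ^ 2) * prodConjDBar c g * prodConjE c g
      = zpowProd (fun j => c (2 * j + 1)) (g + 1) fun j => if j < g then -2 else -2 * g - 4 := by
  set a : ℕ → G := fun j => c (2 * j + 1)
  have hodd : ∀ i < g + 1, ∀ j < g + 1, Commute (a i) (a j) := fun i hi j hj =>
    hc.farCommute.commute_odd (by omega) (by omega)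
  set L := prodDesc c (2 * g + 1) 1
  set R := prodAsc c 1 (2 * g + 1)
  set T := oddProd c (g + 1)
  set q := phiOdd c g ^ 2
  have hEBar : prodConjEBar c g = T⁻¹ * L :=
    eq_inv_mul_of_mul_eq (hc.farCommute.prodDesc_eq_oddProd_mul_prodConjEBar le_rfl).symm
  have hD : prodConjD c g = L * T⁻¹ :=
    eq_mul_inv_of_mul_eq (hc.farCommute.prodDesc_eq_prodConjD_mul_oddProd le_rfl).symm
  have hDBar : prodConjDBar c g = T⁻¹ * R :=
    eq_inv_mul_of_mul_eq (hc.farCommute.prodAsc_eq_oddProd_mul_prodConjDBar le_rfl).symm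
  have hE : prodConjE c g = R * T⁻¹ :=
    eq_mul_inv_of_mul_eq (hc.farCommute.prodAsc_eq_prodConjE_mul_oddProd le_rfl).symm
  have hLR : L ^ 2 * R ^ 2 = 1 := hc.prodDesc_sq_mul_prodAsc_sq hhyper hcentral
  have hT : T = zpowProd a (g + 1) 1 := oddProd_eq_zpowProd c (g + 1)
  have hq : q = zpowProd a (g + 1) fun j => 2 * j + 2 := by
    show phiOdd c g ^ 2 = _
    rw [phiOdd_eq_zpowProd hodd, sq, zpowProd_mul hodd]
    exact zpowProd_congr fun j _ => by simp only [Pi.add_apply]; ring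
  have hshift : SemiconjBy (R ^ 2) (zpowProd a (g + 1) fun j => if j < g then 2 * j + 2 else 0)
      (zpowProd a (g + 1) fun j => 2 * j) :=
    semiconjBy_zpowProd_shift (fun j hj => hc.semiconjBy_prodAsc_sq (by omega) (by omega))
      (by simp) (by simp) (fun j hj => by simp [hj]; ring)
  have hmid : T⁻¹ * q * T⁻¹ = zpowProd a (g + 1) fun j => 2 * j := by
    rw [hT, hq, zpowProd_inv hodd, zpowProd_mul hodd, zpowProd_mul hodd]
    exact zpowProd_congr fun j _ => by simp only [Pi.add_apply, Pi.neg_apply, Pi.one_apply]; ring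
  calc q⁻¹ * prodConjEBar c g * q * (q⁻¹ * prodConjD c g * q) * prodConjDBar c g * prodConjE c g
      = q⁻¹ * T⁻¹ * L ^ 2 * (T⁻¹ * q * T⁻¹) * R ^ 2 * T⁻¹ := by
        rw [hEBar, hD, hDBar, hE]; simp only [sq]; group
    _ = q⁻¹ * T⁻¹ * (L ^ 2 * R ^ 2)
          * (zpowProd a (g + 1) fun j => if j < g then 2 * j + 2 else 0) * T⁻¹ := by
        rw [hmid, mul_assoc (q⁻¹ * T⁻¹ * L ^ 2), ← hshift.eq]; group
    _ = _ := by
        rw [hLR, mul_one, hq, hT]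
        simp only [zpowProd_inv hodd, zpowProd_mul hodd]
        exact zpowProd_congr fun j _ => by
          simp only [Pi.add_apply, Pi.neg_apply, Pi.one_apply]
          split_ifs <;> omega

lemma IsBraidChain.relator_eq_one {g : ℕ} (hc : IsBraidChain c (2 * g + 1)) (hg : 2 ≤ g)
    (hhyper : (prodAsc c 1 (2 * g) * c (2 * g + 1) ^ 2 * prodDesc c (2 * g) 1) ^ 2 = 1)
    (hcentral : Commute (prodDesc c (2 * g) 1 * prodAsc c 1 (2 * g)) (c (2 * g + 1))) :
    ((phiOdd c g ^ 2)⁻¹ * prodConjEBar c g * phiOdd c g ^ 2) *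
      ((phiOdd c g ^ 2)⁻¹ * prodConjD c g * phiOdd c g ^ 2) * prodConjDBar c g * prodConjE c g *
      (oddProd c g * c (2 * g + 1) ^ (g - 2)) ^ 2 * c (2 * g + 1) ^ 8 = 1 := by
  have hodd : ∀ i < g + 1, ∀ j < g + 1, Commute (c (2 * i + 1)) (c (2 * j + 1)) :=
    fun i hi j hj => hc.farCommute.commute_odd (by omega) (by omega)
  rw [hc.conj_products_eq_zpowProd hhyper hcentral, mul_assoc,
    daisy_sq_mul_pow_eight_eq_zpowProd hg hodd, zpowProd_mul hodd, ← zpowProd_zero]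
  exact zpowProd_congr fun j _ => by simp only [Pi.add_apply]; split_ifs <;> omega

end OddMonomials

end HyperellipticChain

/-- the positive relator `H(g,2)` of Theorem 5.2: with
`d i = c (i+1) * c i * (c (i+1))⁻¹`, `d̄ i = (c (i+1))⁻¹ * c i * c (i+1)`,
`e (i+1) = c i * c (i+1) * (c i)⁻¹`, `ē (i+1) = (c i)⁻¹ * c (i+1) * c i`, and
`φ = c (2g+1)^{g+1} c (2g-1)^{g} ⋯ c 3 ^ 2 c 1`, assuming the braid relations,
the hyperelliptic relation, centrality, and the daisy relation, one has
`(φ⁻² ē (2g) φ²) ⋯ (φ⁻² ē 2 φ²) · (φ⁻² d (2g) φ²) ⋯ (φ⁻² d 2 φ²) ·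
d̄ 2 ⋯ d̄ (2g) · e 2 ⋯ e (2g) · (x 1 ⋯ x g)² · c (2g+1)^8 = 1`. -/
theorem statement17 {G : Type*} [Group G] (g : ℕ) (hg : 3 ≤ g) (c x : ℕ → G)
    (hbraid : ∀ i, 1 ≤ i → i + 1 ≤ 2 * g + 1 →
      c i * c (i + 1) * c i = c (i + 1) * c i * c (i + 1))
    (hcomm : ∀ i j, 1 ≤ i → j ≤ 2 * g + 1 → i + 2 ≤ j → c i * c j = c j * c i)
    (hhyper : (prodAsc c 1 (2 * g) * (c (2 * g + 1)) ^ 2 * prodDesc c (2 * g) 1) ^ 2 = 1)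
    (hcentral : Commute (prodDesc c (2 * g) 1 * prodAsc c 1 (2 * g)) (c (2 * g + 1)))
    (hdaisy : ((List.range g).map fun j => x (j + 1)).prod =
      ((List.range g).map fun j => c (2 * j + 1)).prod * (c (2 * g + 1)) ^ (g - 2)) :
    (((List.range g).map fun j =>
        ((phiOdd c g) ^ 2)⁻¹ *
          ((c (2 * g - 2 * j - 1))⁻¹ * c (2 * g - 2 * j) * c (2 * g - 2 * j - 1)) *
          (phiOdd c g) ^ 2).prod) *
      (((List.range g).map fun j =>
        ((phiOdd c g) ^ 2)⁻¹ *
          (c (2 * g - 2 * j + 1) * c (2 * g - 2 * j) * (c (2 * g - 2 * j + 1))⁻¹) *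
          (phiOdd c g) ^ 2).prod) *
      (((List.range g).map fun j =>
        (c (2 * j + 3))⁻¹ * c (2 * j + 2) * c (2 * j + 3)).prod) *
      (((List.range g).map fun j =>
        c (2 * j + 1) * c (2 * j + 2) * (c (2 * j + 1))⁻¹).prod) *
      (((List.range g).map fun j => x (j + 1)).prod) ^ 2 *
      (c (2 * g + 1)) ^ 8 = 1 := by
  have hc : HyperellipticChain.IsBraidChain c (2 * g + 1) := ⟨hbraid, hcomm⟩
  rw [hdaisy, HyperellipticChain.prod_range_conj, HyperellipticChain.prod_range_conj]
  exact hc.relator_eq_one (by omega) hhyper hcentral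
end

section
/- Let $g \ge 3$ and let $G$ be a group containing elements $c_1,\dots,c_{2g+1}$. Set $d_i = c_{i+1} c_i c_{i+1}^{-1}$, $\bar d_i = c_{i+1}^{-1} c_i c_{i+1}$, $e_{i+1} = c_i c_{i+1} c_i^{-1}$, $\bar e_{i+1} = c_i^{-1} c_{i+1} c_i$, and $\varphi = c_{2g+1}^{g+1} c_{2g-1}^{g} \cdots c_5^{3} c_3^{2} c_1$. Assume: (i) $c_1,\dots,c_{2g+1}$ satisfy the braid relations; (ii) the hyperelliptic relation $(c_1 c_2 \cdots c_{2g-1} c_{2g} c_{2g+1}^2 c_{2g} c_{2g-1} \cdots c_2 c_1)^2 = 1$ holds; (iii) the element $c_{2g} c_{2g-1} \cdots c_2 c_1 c_1 c_2 \cdots c_{2g-1} c_{2g}$ commutes with $c_{2g+1}$. Then $(\varphi^{-2} \bar e_{2g} \varphi^{2})(\varphi^{-2} \bar e_{2g-2} \varphi^{2}) \cdots (\varphi^{-2} \bar e_2 \varphi^{2}) \cdot (\varphi^{-2} d_{2g} \varphi^{2})(\varphi^{-2} d_{2g-2} \varphi^{2}) \cdots (\varphi^{-2} d_2 \varphi^{2})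 \cdot \bar d_2 \bar d_4 \cdots \bar d_{2g} \cdot e_2 e_4 \cdots e_{2g} \cdot c_1^2 c_3^2 \cdots c_{2g-1}^2 \cdot c_{2g+1}^{2g+4} = 1$. -/
section Aux
variable {G : Type*} [Group G]
lemma rmp_last (f : ℕ → G) (m : ℕ) :
    ((List.range (m+1)).map f).prod = ((List.range m).map f).prod * f m := by
  rw [List.range_succ, List.map_append, List.prod_append, List.map_singleton,
    List.prod_singleton]
lemma rmp_congr {f f' : ℕ → G} (m : ℕ) (h : ∀ j < m, f j = f' j) :
    ((List.range m).map f).prod = ((List.range m).map f').prod := by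
  congr 1
  exact List.map_congr_left fun j hj => h j (List.mem_range.mp hj)
lemma commute_rmp (x : G) (f : ℕ → G) (m : ℕ) (h : ∀ j < m, Commute x (f j)) :
    Commute x ((List.range m).map f).prod :=
  Commute.list_prod_right _ _ fun y hy => by
    obtain ⟨j, hj, rfl⟩ := List.mem_map.mp hy
    exact h j (List.mem_range.mp hj)
lemma rmp_head (f : ℕ → G) (m : ℕ) :
    ((List.range (m+1)).map f).prod = f 0 * ((List.range m).map fun j => f (j+1)).prod := by
  rw [List.range_succ_eq_map, List.map_cons, List.prod_cons, List.map_map]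
  rfl
lemma conj_rmp (a : G) (f : ℕ → G) (m : ℕ) :
    ((List.range m).map fun j => a⁻¹ * f j * a).prod
      = a⁻¹ * ((List.range m).map f).prod * a := by
  induction m with
  | zero => simp
  | succ m ih => rw [rmp_last, rmp_last, ih]; group
lemma shift_rmp (x : G) (f f' : ℕ → G) (m : ℕ) (h : ∀ j < m, x * f j = f' j * x) :
    x * ((List.range m).map f).prod = ((List.range m).map f').prod * x := by
  induction m with
  | zero => simp
  | succ m ih =>
      rw [rmp_last, rmp_last, ← mul_assoc, ih fun j hj => h j (by omega), mul_assoc,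
        h m (by omega), ← mul_assoc]
lemma pow_split_rmp (a : ℕ → G) (e : ℕ → ℕ) (m : ℕ)
    (h : ∀ i < m, ∀ j < m, Commute (a i) (a j)) :
    ((List.range m).map fun j => a j ^ (e j + 1)).prod
      = ((List.range m).map fun j => a j ^ e j).prod * ((List.range m).map a).prod := by
  induction m with
  | zero => simp
  | succ m ih =>
      rw [rmp_last, rmp_last, rmp_last, ih fun i hi => fun j hj => h i (by omega) j (by omega)]
      have hc : Commute (a m ^ e m) ((List.range m).map a).prod :=
        (commute_rmp _ _ _ fun j hj => (h m (by omega) j (by omega))).pow_left _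
      calc ((List.range m).map fun j => a j ^ e j).prod * ((List.range m).map a).prod
            * a m ^ (e m + 1)
          = ((List.range m).map fun j => a j ^ e j).prod *
            (((List.range m).map a).prod * a m ^ e m) * a m := by
            rw [pow_succ]; group
        _ = ((List.range m).map fun j => a j ^ e j).prod * a m ^ e m *
            (((List.range m).map a).prod * a m) := by rw [← hc.eq]; group
lemma comm_move {a b : G} (h : Commute a b) (x : G) : a * (b * x) = b * (a * x) := by
  rw [← mul_assoc, h.eq, mul_assoc]
lemma mul_tail {a b : G} (h : a = b) (x : G) : a * x = b * x := by rw [h]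
lemma rmp_two (f : ℕ → G) : ((List.range 2).map f).prod = f 0 * f 1 := by
  rw [show (2:ℕ)=1+1 from rfl, rmp_last, show (1:ℕ)=0+1 from rfl, rmp_last]
  simp
end Aux

namespace St18
variable {G : Type*} [Group G]

def dl (c : ℕ → G) (g : ℕ) : G := ((List.range (2*g+1)).map fun j => c (1+j)).prod
def db (c : ℕ → G) (g : ℕ) : G := ((List.range (2*g+1)).map fun j => c (2*g+1-j)).prod

variable (c : ℕ → G) (g : ℕ)

lemma asc_split (a m n : ℕ) :
    ((List.range (m+n)).map fun j => c (a+j)).prod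
      = ((List.range m).map fun j => c (a+j)).prod
        * ((List.range n).map fun j => c (a+m+j)).prod := by
  induction n with
  | zero => simp
  | succ n ih =>
      rw [show m + (n+1) = (m+n)+1 from rfl, rmp_last, ih, rmp_last, mul_assoc]
      congr 3
      omega

lemma dsc_split (a m n : ℕ) :
    ((List.range (m+n)).map fun j => c (a-j)).prod
      = ((List.range m).map fun j => c (a-j)).prod
        * ((List.range n).map fun j => c (a-m-j)).prod := by
  induction n with
  | zero => simp
  | succ n ih =>
      rw [show m + (n+1) = (m+n)+1 from rfl, rmp_last, ih, rmp_last, mul_assoc]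
      congr 3
      omega

variable (hbraid : ∀ i, 1 ≤ i → i + 1 ≤ 2 * g + 1 →
      c i * c (i + 1) * c i = c (i + 1) * c i * c (i + 1))
    (hcomm : ∀ i j, 1 ≤ i → j ≤ 2 * g + 1 → i + 2 ≤ j → c i * c j = c j * c i)

include hcomm in
lemma cc : ∀ i j, 1 ≤ i → j ≤ 2*g+1 → i+2 ≤ j → Commute (c i) (c j) := fun i j h1 h2 h3 =>
  hcomm i j h1 h2 h3

include hbraid hcomm in
lemma delta_shift : ∀ i, 1 ≤ i → i ≤ 2*g → dl c g * c i = c (i+1) * dl c g := by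
  intro i h1 h2
  set P : G := ((List.range (i-1)).map fun j => c (1+j)).prod with hP
  set S : G := ((List.range (2*g-i)).map fun j => c (i+2+j)).prod with hS
  have hdl : dl c g = P * ((c i * c (i+1)) * S) := by
    rw [dl, show 2*g+1 = (i-1) + (2 + (2*g-i)) by omega, asc_split]
    have e1 : ((List.range (2+(2*g-i))).map fun j => c (1+(i-1)+j)).prod
        = ((List.range (2+(2*g-i))).map fun j => c (i+j)).prod :=
      rmp_congr _ fun j hj => by congr 1; omega
    rw [e1, asc_split c i 2 (2*g-i), rmp_two]
    have e2 : c (i+0) = c i := by congr 1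
    rw [e2]
  have hcS : Commute (c i) S :=
    commute_rmp _ _ _ fun j hj => cc c g hcomm i (i+2+j) h1 (by omega) (by omega)
  have hcP : Commute (c (i+1)) P :=
    commute_rmp _ _ _ fun j hj =>
      (cc c g hcomm (1+j) (i+1) (by omega) (by omega) (by omega)).symm
  have hb := hbraid i h1 (by omega)
  calc dl c g * c i = P * (c i * c (i+1) * c i * S) := by
        rw [hdl]; simp only [mul_assoc]; rw [← hcS.eq]
    _ = P * (c (i+1) * c i * c (i+1) * S) := by rw [hb]
    _ = c (i+1) * (P * ((c i * c (i+1)) * S)) := by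
        simp only [mul_assoc]; rw [← mul_assoc, ← hcP.eq, mul_assoc]
    _ = c (i+1) * dl c g := by rw [← hdl]

include hbraid hcomm in
lemma dbar_shift : ∀ i, 1 ≤ i → i ≤ 2*g → db c g * c (i+1) = c i * db c g := by
  intro i h1 h2
  set P : G := ((List.range (2*g-i)).map fun j => c (2*g+1-j)).prod with hP
  set S : G := ((List.range (i-1)).map fun j => c (i-1-j)).prod with hS
  have hdb : db c g = P * ((c (i+1) * c i) * S) := by
    have hlen : 2*g+1 = (2*g-i)+(2+(i-1)) := by omega
    have h0 : db c g
        = ((List.range ((2*g-i)+(2+(i-1)))).map fun j => c (2*g+1-j)).prod := by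
      rw [db, ← hlen]
    rw [h0, dsc_split]
    have e1 : ((List.range (2+(i-1))).map fun j => c (2*g+1-(2*g-i)-j)).prod
        = ((List.range (2+(i-1))).map fun j => c ((i+1)-j)).prod :=
      rmp_congr _ fun j hj => by congr 1; omega
    rw [e1, dsc_split c (i+1) 2 (i-1), rmp_two]
    have e2 : c (i+1-0) = c (i+1) := by norm_num
    have e3 : c (i+1-1) = c i := by norm_num
    have e4 : ((List.range (i-1)).map fun j => c (i+1-2-j)).prod = S :=
      rmp_congr _ fun j hj => by congr 1 <;> omega
    rw [e2, e3, e4]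
  have hcS : Commute (c (i+1)) S :=
    commute_rmp _ _ _ fun j hj =>
      (cc c g hcomm (i-1-j) (i+1) (by omega) (by omega) (by omega)).symm
  have hcP : Commute (c i) P :=
    commute_rmp _ _ _ fun j hj => cc c g hcomm i (2*g+1-j) h1 (by omega) (by omega)
  have hb := hbraid i h1 (by omega)
  calc db c g * c (i+1) = P * (c (i+1) * c i * c (i+1) * S) := by
        rw [hdb]; simp only [mul_assoc]; rw [← hcS.eq]
    _ = P * (c i * c (i+1) * c i * S) := by rw [← hb]
    _ = c i * (P * ((c (i+1) * c i) * S)) := by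
        simp only [mul_assoc]; rw [← mul_assoc, ← hcP.eq, mul_assoc]
    _ = c i * db c g := by rw [← hdb]

def aA (c : ℕ → G) (g : ℕ) : G := ((List.range (2*g)).map fun j => c (1+j)).prod
def a2 (c : ℕ → G) (g : ℕ) : G := ((List.range (2*g)).map fun j => c (2+j)).prod
def bd (c : ℕ → G) (g : ℕ) : G := ((List.range (2*g)).map fun j => c (2*g-j)).prod
def d2 (c : ℕ → G) (g : ℕ) : G := ((List.range (2*g)).map fun j => c (2*g+1-j)).prod

lemma dl_head : dl c g = c 1 * a2 c g := by
  rw [dl, rmp_head, a2]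
  have : c (1+0) = c 1 := by norm_num
  rw [this]
  congr 1
  exact rmp_congr _ fun j hj => by congr 1 <;> omega

lemma dl_last : dl c g = aA c g * c (2*g+1) := by
  rw [dl, rmp_last, aA]
  congr 2
  omega

lemma db_head : db c g = c (2*g+1) * bd c g := by
  rw [db, rmp_head, bd]
  have : c (2*g+1-0) = c (2*g+1) := by norm_num
  rw [this]
  congr 1
  exact rmp_congr _ fun j hj => by congr 1 <;> omega

lemma db_last : db c g = d2 c g * c 1 := by
  rw [db, rmp_last, d2]
  congr 2
  omega

include hbraid hcomm in
lemma hp_comm_low : ∀ i, 1 ≤ i → i ≤ 2*g → Commute (db c g * dl c g) (c i) := by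
  intro i h1 h2
  show db c g * dl c g * c i = c i * (db c g * dl c g)
  rw [mul_assoc, delta_shift c g hbraid hcomm i h1 h2, ← mul_assoc,
    dbar_shift c g hbraid hcomm i h1 h2, mul_assoc]

lemma hp_comm_t (hcent : Commute (bd c g * aA c g) (c (2*g+1))) :
    Commute (db c g * dl c g) (c (2*g+1)) := by
  have H : ∀ x : G, bd c g * (aA c g * (c (2*g+1) * x))
      = c (2*g+1) * (bd c g * (aA c g * x)) := by
    intro x
    calc bd c g * (aA c g * (c (2*g+1) * x)) = (bd c g * aA c g * c (2*g+1)) * x := by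
          simp only [mul_assoc]
      _ = (c (2*g+1) * (bd c g * aA c g)) * x := by rw [hcent.eq]
      _ = c (2*g+1) * (bd c g * (aA c g * x)) := by simp only [mul_assoc]
  show db c g * dl c g * c (2*g+1) = c (2*g+1) * (db c g * dl c g)
  rw [db_head, dl_last]
  simp only [mul_assoc]
  congr 1
  exact H (c (2*g+1))

include hbraid hcomm in
lemma hp_comm (hcent : Commute (bd c g * aA c g) (c (2*g+1))) :
    ∀ i, 1 ≤ i → i ≤ 2*g+1 → Commute (db c g * dl c g) (c i) := by
  intro i h1 h2
  rcases Nat.lt_or_ge i (2*g+1) with h | h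
  · exact hp_comm_low c g hbraid hcomm i h1 (by omega)
  · have : i = 2*g+1 := by omega
    subst this
    exact hp_comm_t c g hcent

include hbraid hcomm in
lemma h_eq (hcent : Commute (bd c g * aA c g) (c (2*g+1))) :
    dl c g * db c g = db c g * dl c g := by
  have hcdl : Commute (db c g * dl c g) (dl c g) := by
    rw [dl]
    exact commute_rmp _ _ _ fun j hj =>
      hp_comm c g hbraid hcomm hcent (1+j) (by omega) (by omega)
  have h2 : (db c g * dl c g) * dl c g = (dl c g * db c g) * dl c g := by
    simp only [mul_assoc]
    exact hcdl.eq.symm ▸ (by simp only [mul_assoc] : db c g * dl c g * dl c g = db c g * (dl c g * dl c g)) ▸ rfl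
  exact (mul_right_cancel h2).symm

include hbraid hcomm in
lemma h_comm (hcent : Commute (bd c g * aA c g) (c (2*g+1))) :
    ∀ i, 1 ≤ i → i ≤ 2*g+1 → Commute (dl c g * db c g) (c i) := by
  intro i h1 h2
  rw [h_eq c g hbraid hcomm hcent]
  exact hp_comm c g hbraid hcomm hcent i h1 h2

lemma h_sq (hhyp : (aA c g * c (2*g+1) ^ 2 * bd c g) ^ 2 = 1) :
    (dl c g * db c g) * (dl c g * db c g) = 1 := by
  have e : dl c g * db c g = aA c g * c (2*g+1) ^ 2 * bd c g := by
    rw [dl_last, db_head, pow_two]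
    simp only [mul_assoc]
  rw [e, ← pow_two]
  exact hhyp

lemma braid_flip {x y : G} (hb : x*y*x = y*x*y) : x⁻¹ * y * x = y * x * y⁻¹ := by
  calc x⁻¹ * y * x = x⁻¹ * (y*x*y) * y⁻¹ := by group
    _ = x⁻¹ * (x*y*x) * y⁻¹ := by rw [hb]
    _ = y * x * y⁻¹ := by group

include hcomm in
lemma odd_comm (a b : ℕ) (ha : a ≤ g) (hb : b ≤ g) : Commute (c (2*a+1)) (c (2*b+1)) := by
  rcases lt_trichotomy a b with h | h | h
  · exact cc c g hcomm _ _ (by omega) (by omega) (by omega)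
  · rw [h]
  · exact (cc c g hcomm _ _ (by omega) (by omega) (by omega)).symm

include hbraid hcomm in
lemma ebar_eq : ∀ m, m ≤ g →
    ((List.range m).map fun j => (c (2*g-2*j-1))⁻¹ * c (2*g-2*j) * c (2*g-2*j-1)).prod
      = ((List.range (2*m)).map fun j => c (2*g-j)).prod
        * (((List.range m).map fun j => c (2*g-2*j)).prod)⁻¹ := by
  intro m
  induction m with
  | zero => simp
  | succ m ih =>
      intro hm
      have hb := hbraid (2*g-2*m-1) (by omega) (by omega)
      rw [show 2*g-2*m-1+1 = 2*g-2*m by omega] at hb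
      have blk := braid_flip hb
      have hWy : Commute (c (2*g-2*m)) ((List.range m).map fun j => c (2*g-2*j)).prod :=
        commute_rmp _ _ _ fun j hj =>
          cc c g hcomm (2*g-2*m) (2*g-2*j) (by omega) (by omega) (by omega)
      have hWx : Commute (c (2*g-2*m-1)) ((List.range m).map fun j => c (2*g-2*j)).prod :=
        commute_rmp _ _ _ fun j hj =>
          cc c g hcomm (2*g-2*m-1) (2*g-2*j) (by omega) (by omega) (by omega)
      rw [rmp_last, ih (by omega), blk,
        show 2*(m+1) = (2*m+1)+1 from rfl, rmp_last, rmp_last, rmp_last,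
        show c (2*g-(2*m+1)) = c (2*g-2*m-1) from by congr 1 <;> omega,
        mul_inv_rev]
      calc ((List.range (2*m)).map fun j => c (2*g-j)).prod
            * (((List.range m).map fun j => c (2*g-2*j)).prod)⁻¹
            * (c (2*g-2*m) * c (2*g-2*m-1) * (c (2*g-2*m))⁻¹)
          = ((List.range (2*m)).map fun j => c (2*g-j)).prod
            * ((((List.range m).map fun j => c (2*g-2*j)).prod)⁻¹
              * (c (2*g-2*m) * (c (2*g-2*m-1) * (c (2*g-2*m))⁻¹))) := by
            simp only [mul_assoc]
        _ = ((List.range (2*m)).map fun j => c (2*g-j)).prod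
            * (c (2*g-2*m) * (c (2*g-2*m-1)
              * ((((List.range m).map fun j => c (2*g-2*j)).prod)⁻¹ * (c (2*g-2*m))⁻¹))) := by
            rw [comm_move hWy.symm.inv_left, comm_move hWx.symm.inv_left]
        _ = ((List.range (2*m)).map fun j => c (2*g-j)).prod * c (2*g-2*m) * c (2*g-2*m-1)
            * ((c (2*g-2*m))⁻¹ * (((List.range m).map fun j => c (2*g-2*j)).prod)⁻¹) := by
            rw [(hWy.symm.inv_left.inv_right).eq]
            simp only [mul_assoc]

include hbraid hcomm in
lemma dd_eq : ∀ m, m ≤ g →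
    ((List.range m).map fun j => c (2*g-2*j+1) * c (2*g-2*j) * (c (2*g-2*j+1))⁻¹).prod
      = (((List.range m).map fun j => c (2*g-2*j)).prod)⁻¹
        * ((List.range (2*m)).map fun j => c (2*g+1-j)).prod := by
  intro m
  induction m with
  | zero => simp
  | succ m ih =>
      intro hm
      have hb := hbraid (2*g-2*m) (by omega) (by omega)
      rw [show 2*g-2*m+1 = 2*g-2*m+1 from rfl] at hb
      have blk := (braid_flip hb).symm
      have hD : Commute (c (2*g-2*m)) ((List.range (2*m)).map fun j => c (2*g+1-j)).prod :=
        commute_rmp _ _ _ fun j hj =>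
          cc c g hcomm (2*g-2*m) (2*g+1-j) (by omega) (by omega) (by omega)
      have hWy : Commute (c (2*g-2*m)) ((List.range m).map fun j => c (2*g-2*j)).prod :=
        commute_rmp _ _ _ fun j hj =>
          cc c g hcomm (2*g-2*m) (2*g-2*j) (by omega) (by omega) (by omega)
      rw [rmp_last, ih (by omega), blk,
        show 2*(m+1) = (2*m+1)+1 from rfl, rmp_last, rmp_last, rmp_last,
        show c (2*g+1-2*m) = c (2*g-2*m+1) from by congr 1 <;> omega,
        show c (2*g+1-(2*m+1)) = c (2*g-2*m) from by congr 1 <;> omega,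
        mul_inv_rev]
      calc (((List.range m).map fun j => c (2*g-2*j)).prod)⁻¹
            * ((List.range (2*m)).map fun j => c (2*g+1-j)).prod
            * ((c (2*g-2*m))⁻¹ * c (2*g-2*m+1) * c (2*g-2*m))
          = (((List.range m).map fun j => c (2*g-2*j)).prod)⁻¹
            * (((List.range (2*m)).map fun j => c (2*g+1-j)).prod
              * ((c (2*g-2*m))⁻¹ * (c (2*g-2*m+1) * c (2*g-2*m)))) := by
            simp only [mul_assoc]
        _ = (((List.range m).map fun j => c (2*g-2*j)).prod)⁻¹
            * ((c (2*g-2*m))⁻¹ * (((List.range (2*m)).map fun j => c (2*g+1-j)).prod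
              * (c (2*g-2*m+1) * c (2*g-2*m)))) := by
            rw [comm_move hD.symm.inv_right]
        _ = (c (2*g-2*m))⁻¹ * (((List.range m).map fun j => c (2*g-2*j)).prod)⁻¹
            * (((List.range (2*m)).map fun j => c (2*g+1-j)).prod * c (2*g-2*m+1)
              * c (2*g-2*m)) := by
            rw [comm_move hWy.symm.inv_left.inv_right]
            simp only [mul_assoc]

include hcomm in
lemma dbar_eq : ∀ m, m ≤ g →
    ((List.range m).map fun j => (c (2*j+3))⁻¹ * c (2*j+2) * c (2*j+3)).prod
      = (((List.range m).map fun j => c (2*j+3)).prod)⁻¹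
        * ((List.range (2*m)).map fun j => c (2+j)).prod := by
  intro m
  induction m with
  | zero => simp
  | succ m ih =>
      intro hm
      have hA : Commute (c (2*m+3)) ((List.range (2*m)).map fun j => c (2+j)).prod :=
        commute_rmp _ _ _ fun j hj =>
          (cc c g hcomm (2+j) (2*m+3) (by omega) (by omega) (by omega)).symm
      have hY : Commute (c (2*m+3)) ((List.range m).map fun j => c (2*j+3)).prod :=
        commute_rmp _ _ _ fun j hj =>
          (cc c g hcomm (2*j+3) (2*m+3) (by omega) (by omega) (by omega)).symm
      rw [rmp_last, ih (by omega),
        show 2*(m+1) = (2*m+1)+1 from rfl, rmp_last, rmp_last, rmp_last,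
        show c (2+2*m) = c (2*m+2) from by congr 1 <;> omega,
        show c (2+(2*m+1)) = c (2*m+3) from by congr 1 <;> omega,
        mul_inv_rev]
      calc (((List.range m).map fun j => c (2*j+3)).prod)⁻¹
            * ((List.range (2*m)).map fun j => c (2+j)).prod
            * ((c (2*m+3))⁻¹ * c (2*m+2) * c (2*m+3))
          = (((List.range m).map fun j => c (2*j+3)).prod)⁻¹
            * (((List.range (2*m)).map fun j => c (2+j)).prod
              * ((c (2*m+3))⁻¹ * (c (2*m+2) * c (2*m+3)))) := by
            simp only [mul_assoc]
        _ = (((List.range m).map fun j => c (2*j+3)).prod)⁻¹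
            * ((c (2*m+3))⁻¹ * (((List.range (2*m)).map fun j => c (2+j)).prod
              * (c (2*m+2) * c (2*m+3)))) := by
            rw [comm_move hA.symm.inv_right]
        _ = (c (2*m+3))⁻¹ * (((List.range m).map fun j => c (2*j+3)).prod)⁻¹
            * (((List.range (2*m)).map fun j => c (2+j)).prod * c (2*m+2) * c (2*m+3)) := by
            rw [comm_move hY.symm.inv_left.inv_right]
            simp only [mul_assoc]

include hcomm in
lemma e_eq : ∀ m, m ≤ g →
    ((List.range m).map fun j => c (2*j+1) * c (2*j+2) * (c (2*j+1))⁻¹).prod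
      = ((List.range (2*m)).map fun j => c (1+j)).prod
        * (((List.range m).map fun j => c (2*j+1)).prod)⁻¹ := by
  intro m
  induction m with
  | zero => simp
  | succ m ih =>
      intro hm
      have hZ1 : Commute (c (2*m+1)) ((List.range m).map fun j => c (2*j+1)).prod :=
        commute_rmp _ _ _ fun j hj =>
          (cc c g hcomm (2*j+1) (2*m+1) (by omega) (by omega) (by omega)).symm
      have hZ2 : Commute (c (2*m+2)) ((List.range m).map fun j => c (2*j+1)).prod :=
        commute_rmp _ _ _ fun j hj =>
          (cc c g hcomm (2*j+1) (2*m+2) (by omega) (by omega) (by omega)).symm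
      rw [rmp_last, ih (by omega),
        show 2*(m+1) = (2*m+1)+1 from rfl, rmp_last, rmp_last, rmp_last,
        show c (1+2*m) = c (2*m+1) from by congr 1 <;> omega,
        show c (1+(2*m+1)) = c (2*m+2) from by congr 1 <;> omega,
        mul_inv_rev]
      calc ((List.range (2*m)).map fun j => c (1+j)).prod
            * (((List.range m).map fun j => c (2*j+1)).prod)⁻¹
            * (c (2*m+1) * c (2*m+2) * (c (2*m+1))⁻¹)
          = ((List.range (2*m)).map fun j => c (1+j)).prod
            * ((((List.range m).map fun j => c (2*j+1)).prod)⁻¹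
              * (c (2*m+1) * (c (2*m+2) * (c (2*m+1))⁻¹))) := by
            simp only [mul_assoc]
        _ = ((List.range (2*m)).map fun j => c (1+j)).prod
            * (c (2*m+1) * (c (2*m+2)
              * ((((List.range m).map fun j => c (2*j+1)).prod)⁻¹ * (c (2*m+1))⁻¹))) := by
            rw [comm_move hZ1.inv_right.symm, comm_move hZ2.inv_right.symm]
        _ = ((List.range (2*m)).map fun j => c (1+j)).prod * c (2*m+1) * c (2*m+2)
            * ((c (2*m+1))⁻¹ * (((List.range m).map fun j => c (2*j+1)).prod)⁻¹) := by
            rw [(hZ1.symm.inv_left.inv_right).eq]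
            simp only [mul_assoc]

include hcomm in
lemma wd_eq : ((List.range g).map fun j => c (2*g-2*j)).prod
    = ((List.range g).map fun j => c (2*j+2)).prod := by
  have main : ∀ m, m ≤ g → ((List.range m).map fun j => c (2*g-2*j)).prod
      = ((List.range m).map fun j => c (2*(g-m)+2+2*j)).prod := by
    intro m
    induction m with
    | zero => simp
    | succ m ih =>
        intro hm
        have hre : ((List.range (m+1)).map fun j => c (2*(g-(m+1))+2+2*j)).prod
            = c (2*g-2*m) * ((List.range m).map fun j => c (2*(g-m)+2+2*j)).prod := by
          rw [rmp_head]
          congr 1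
          · congr 1; omega
          · exact rmp_congr _ fun j hj => by congr 1 <;> omega
        have hcm : Commute (c (2*g-2*m)) ((List.range m).map fun j => c (2*(g-m)+2+2*j)).prod :=
          commute_rmp _ _ _ fun j hj =>
            cc c g hcomm (2*g-2*m) (2*(g-m)+2+2*j) (by omega) (by omega) (by omega)
        rw [rmp_last, ih (by omega), hre, ← hcm.eq]
  have := main g (le_refl g)
  rw [this]
  exact rmp_congr _ fun j hj => by congr 1 <;> omega

include hcomm in
lemma ud_eq : ((List.range g).map fun j => c (2*(g-1-j)+1)).prod
    = ((List.range g).map fun j => c (2*j+1)).prod := by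
  have main : ∀ m, m ≤ g → ((List.range m).map fun j => c (2*(g-1-j)+1)).prod
      = ((List.range m).map fun j => c (2*(g-m)+1+2*j)).prod := by
    intro m
    induction m with
    | zero => simp
    | succ m ih =>
        intro hm
        have hre : ((List.range (m+1)).map fun j => c (2*(g-(m+1))+1+2*j)).prod
            = c (2*(g-1-m)+1) * ((List.range m).map fun j => c (2*(g-m)+1+2*j)).prod := by
          rw [rmp_head]
          congr 1
          · congr 1; omega
          · exact rmp_congr _ fun j hj => by congr 1 <;> omega
        have hcm : Commute (c (2*(g-1-m)+1))
            ((List.range m).map fun j => c (2*(g-m)+1+2*j)).prod :=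
          commute_rmp _ _ _ fun j hj =>
            cc c g hcomm (2*(g-1-m)+1) (2*(g-m)+1+2*j) (by omega) (by omega) (by omega)
        rw [rmp_last, ih (by omega), hre, ← hcm.eq]
  have := main g (le_refl g)
  rw [this]
  exact rmp_congr _ fun j hj => by congr 1 <;> omega

include hcomm in
lemma q_eq : ((List.range g).map fun j => (c (2*j+1))^2).prod
    = ((List.range g).map fun j => c (2*j+1)).prod
      * ((List.range g).map fun j => c (2*j+1)).prod := by
  have h1 : ((List.range g).map fun j => (c (2*j+1))^2).prod
      = ((List.range g).map fun j => (c (2*j+1)) ^ ((fun _ => 1) j + 1)).prod :=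
    rmp_congr _ fun j hj => by norm_num
  rw [h1, pow_split_rmp _ _ _ fun i hi => fun j hj =>
    odd_comm c g hcomm i j (by omega) (by omega)]
  congr 1
  exact rmp_congr _ fun j hj => by rw [pow_one]

include hbraid hcomm in
lemma dlU : ∀ x : G, dl c g * (((List.range g).map fun j => c (2*j+1)).prod * x)
    = ((List.range g).map fun j => c (2*j+2)).prod * (dl c g * x) := by
  have base : dl c g * ((List.range g).map fun j => c (2*j+1)).prod
      = ((List.range g).map fun j => c (2*j+2)).prod * dl c g := by
    refine shift_rmp _ _ _ _ fun j hj => ?_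
    have := delta_shift c g hbraid hcomm (2*j+1) (by omega) (by omega)
    rwa [show 2*j+1+1 = 2*j+2 by omega] at this
  intro x
  have := mul_tail base x
  simp only [mul_assoc] at this ⊢
  exact this

include hbraid hcomm in
lemma dlV : ∀ x : G, dl c g * (((List.range g).map fun j => c (2*j+2)).prod * x)
    = ((List.range g).map fun j => c (2*j+3)).prod * (dl c g * x) := by
  have base : dl c g * ((List.range g).map fun j => c (2*j+2)).prod
      = ((List.range g).map fun j => c (2*j+3)).prod * dl c g := by
    refine shift_rmp _ _ _ _ fun j hj => ?_
    have := delta_shift c g hbraid hcomm (2*j+2) (by omega) (by omega)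
    rwa [show 2*j+2+1 = 2*j+3 by omega] at this
  intro x
  have := mul_tail base x
  simp only [mul_assoc] at this ⊢
  exact this

include hbraid hcomm in
lemma K1 : ∀ x : G, dl c g * (dl c g * (((List.range g).map fun j => c (2*j+1)).prod
      * (((List.range g).map fun j => c (2*j+1)).prod
        * (((List.range g).map fun j => c (2*j+1)).prod * x))))
    = ((List.range g).map fun j => c (2*j+3)).prod * (dl c g
      * (((List.range g).map fun j => c (2*j+2)).prod
        * (((List.range g).map fun j => c (2*j+2)).prod * (dl c g * x)))) := by
  intro x
  rw [dlU c g hbraid hcomm, dlU c g hbraid hcomm, dlU c g hbraid hcomm,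
    dlV c g hbraid hcomm, dlV c g hbraid hcomm, dlV c g hbraid hcomm]

lemma phi_body : phiOdd c g = ((List.range (g+1)).map fun j => c (2*(g-j)+1) ^ (g-j+1)).prod :=
  rfl

lemma phi_head : phiOdd c g = c (2*g+1) ^ (g+1)
    * ((List.range g).map fun j => c (2*(g-1-j)+1) ^ (g-j)).prod := by
  rw [phi_body, rmp_head]
  congr 1
  exact rmp_congr _ fun j hj => by
    have e1 : 2*(g-(j+1))+1 = 2*(g-1-j)+1 := by omega
    have e2 : g-(j+1)+1 = g-j := by omega
    rw [e1, e2]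

lemma phi_last : phiOdd c g
    = ((List.range g).map fun j => c (2*(g-j)+1) ^ (g-j+1)).prod * c 1 := by
  rw [phi_body, rmp_last]
  congr 1
  have e1 : 2*(g-g)+1 = 1 := by omega
  have e2 : g-g+1 = 1 := by omega
  rw [e1, e2, pow_one]

include hbraid hcomm in
lemma sc2 : ∀ k, 1 ≤ k → k+2 ≤ 2*g+1 →
    SemiconjBy (dl c g * dl c g) (c k) (c (k+2)) := by
  intro k h1 h2
  show dl c g * dl c g * c k = c (k+2) * (dl c g * dl c g)
  rw [mul_assoc, delta_shift c g hbraid hcomm k h1 (by omega), ← mul_assoc,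
    delta_shift c g hbraid hcomm (k+1) (by omega) (by omega), mul_assoc,
    show k+1+1 = k+2 from rfl]

include hbraid hcomm in
lemma shiftX : (dl c g * dl c g) * ((List.range g).map fun j => c (2*(g-1-j)+1) ^ (g-j+1)).prod
    = ((List.range g).map fun j => c (2*(g-j)+1) ^ (g-j+1)).prod * (dl c g * dl c g) := by
  refine shift_rmp _ _ _ _ fun j hj => ?_
  have s := (sc2 c g hbraid hcomm (2*(g-1-j)+1) (by omega) (by omega)).pow_right (g-j+1)
  have e : 2*(g-1-j)+1+2 = 2*(g-j)+1 := by omega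
  rw [e] at s
  exact s

include hcomm in
lemma Xsplit : ((List.range g).map fun j => c (2*(g-1-j)+1) ^ (g-j+1)).prod
    = ((List.range g).map fun j => c (2*(g-1-j)+1) ^ (g-j)).prod
      * ((List.range g).map fun j => c (2*j+1)).prod := by
  have := pow_split_rmp (fun j => c (2*(g-1-j)+1)) (fun j => g-j) g
    (fun i hi => fun j hj => odd_comm c g hcomm (g-1-i) (g-1-j) (by omega) (by omega))
  rw [this, ud_eq c g hcomm]

include hcomm in
lemma c1_phi : Commute (c 1) (phiOdd c g) := by
  rw [phi_body]
  refine commute_rmp _ _ _ fun j hj => ?_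
  rcases Nat.eq_zero_or_pos (g-j) with h | h
  · have e : 2*(g-j)+1 = 1 := by omega
    rw [e]
    exact (Commute.refl _).pow_right _
  · exact (cc c g hcomm 1 (2*(g-j)+1) (by omega) (by omega) (by omega)).pow_right _

include hcomm in
lemma codd_phi (a : ℕ) (ha : a ≤ g) : Commute (c (2*a+1)) (phiOdd c g) := by
  rw [phi_body]
  exact commute_rmp _ _ _ fun j hj =>
    (odd_comm c g hcomm a (g-j) ha (by omega)).pow_right _

include hcomm in
lemma phi_U : Commute (phiOdd c g) ((List.range g).map fun j => c (2*j+1)).prod :=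
  commute_rmp _ _ _ fun j hj => (codd_phi c g hcomm j (by omega)).symm

include hcomm in
lemma phi_uUp : Commute (phiOdd c g) ((List.range g).map fun j => c (2*j+3)).prod :=
  commute_rmp _ _ _ fun j hj => by
    have := codd_phi c g hcomm (j+1) (by omega)
    rw [show 2*(j+1)+1 = 2*j+3 by omega] at this
    exact this.symm

include hcomm in
lemma rho_t : Commute (c (2*g+1)) ((List.range g).map fun j => c (2*(g-1-j)+1) ^ (g-j)).prod :=
  commute_rmp _ _ _ fun j hj =>
    (odd_comm c g hcomm g (g-1-j) (le_refl g) (by omega)).pow_right _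

include hcomm in
lemma rho_U : Commute ((List.range g).map fun j => c (2*(g-1-j)+1) ^ (g-j)).prod
    ((List.range g).map fun j => c (2*j+1)).prod :=
  commute_rmp _ _ _ fun j hj =>
    (commute_rmp _ _ _ fun i hi =>
      (odd_comm c g hcomm j (g-1-i) (by omega) (by omega)).pow_right _).symm

include hcomm in
lemma rhohat_c1 : Commute (c 1) ((List.range g).map fun j => c (2*(g-j)+1) ^ (g-j+1)).prod :=
  commute_rmp _ _ _ fun j hj =>
    (cc c g hcomm 1 (2*(g-j)+1) (by omega) (by omega) (by omega)).pow_right _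

include hcomm in
lemma t_U : Commute (c (2*g+1)) ((List.range g).map fun j => c (2*j+1)).prod :=
  commute_rmp _ _ _ fun j hj =>
    (cc c g hcomm (2*j+1) (2*g+1) (by omega) (by omega) (by omega)).symm

include hbraid hcomm in
lemma corephi : phiOdd c g * (dl c g * dl c g)
    = c 1 * ((dl c g * dl c g)
      * (((List.range g).map fun j => c (2*(g-1-j)+1) ^ (g-j)).prod
        * ((List.range g).map fun j => c (2*j+1)).prod)) := by
  calc phiOdd c g * (dl c g * dl c g)
      = (((List.range g).map fun j => c (2*(g-j)+1) ^ (g-j+1)).prod * c 1)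
        * (dl c g * dl c g) := by rw [← phi_last]
    _ = c 1 * (((List.range g).map fun j => c (2*(g-j)+1) ^ (g-j+1)).prod
        * (dl c g * dl c g)) := by
        rw [← (rhohat_c1 c g hcomm).eq, mul_assoc]
    _ = c 1 * ((dl c g * dl c g)
        * ((List.range g).map fun j => c (2*(g-1-j)+1) ^ (g-j+1)).prod) := by
        rw [shiftX c g hbraid hcomm]
    _ = c 1 * ((dl c g * dl c g)
        * (((List.range g).map fun j => c (2*(g-1-j)+1) ^ (g-j)).prod
          * ((List.range g).map fun j => c (2*j+1)).prod)) := by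
        rw [Xsplit c g hcomm]

include hcomm in
lemma phisq : (phiOdd c g)^2 = (c (2*g+1))^(2*g+2)
    * (((List.range g).map fun j => c (2*(g-1-j)+1) ^ (g-j)).prod
      * ((List.range g).map fun j => c (2*(g-1-j)+1) ^ (g-j)).prod) := by
  have hcr : Commute (((List.range g).map fun j => c (2*(g-1-j)+1) ^ (g-j)).prod)
      ((c (2*g+1))^(g+1)) := ((rho_t c g hcomm).symm).pow_right (g+1)
  calc (phiOdd c g)^2
      = (c (2*g+1))^(g+1) * (((List.range g).map fun j => c (2*(g-1-j)+1) ^ (g-j)).prod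
        * ((c (2*g+1))^(g+1) * ((List.range g).map fun j => c (2*(g-1-j)+1) ^ (g-j)).prod)) := by
        rw [phi_head c g, pow_two]
        simp only [mul_assoc]
    _ = (c (2*g+1))^(g+1) * ((c (2*g+1))^(g+1)
        * (((List.range g).map fun j => c (2*(g-1-j)+1) ^ (g-j)).prod
          * ((List.range g).map fun j => c (2*(g-1-j)+1) ^ (g-j)).prod)) := by
        rw [comm_move hcr]
    _ = (c (2*g+1))^(2*g+2)
        * (((List.range g).map fun j => c (2*(g-1-j)+1) ^ (g-j)).prod
          * ((List.range g).map fun j => c (2*(g-1-j)+1) ^ (g-j)).prod) := by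
        rw [← mul_assoc, ← pow_add, show g+1+(g+1) = 2*g+2 by omega]

include hcomm in
lemma rhorho : ∀ x : G, ((List.range g).map fun j => c (2*(g-1-j)+1) ^ (g-j)).prod
      * (((List.range g).map fun j => c (2*(g-1-j)+1) ^ (g-j)).prod * x)
    = ((c (2*g+1))^(2*g+2))⁻¹ * ((phiOdd c g)^2 * x) := by
  intro x
  have base : ((List.range g).map fun j => c (2*(g-1-j)+1) ^ (g-j)).prod
      * ((List.range g).map fun j => c (2*(g-1-j)+1) ^ (g-j)).prod
      = ((c (2*g+1))^(2*g+2))⁻¹ * (phiOdd c g)^2 := by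
    rw [phisq c g hcomm]
    group
  have := mul_tail base x
  simp only [mul_assoc] at this ⊢
  exact this

include hbraid hcomm in
lemma key10 : ∀ x : G, (phiOdd c g)^2 * (dl c g * (dl c g * x))
    = c 1 * (c 1 * (dl c g * (dl c g * (((c (2*g+1))^(2*g+2))⁻¹
      * ((phiOdd c g)^2 * (((List.range g).map fun j => c (2*j+1)).prod
        * (((List.range g).map fun j => c (2*j+1)).prod * x))))))) := by
  have base : (phiOdd c g)^2 * (dl c g * dl c g)
      = c 1 * (c 1 * ((dl c g * dl c g) * (((c (2*g+1))^(2*g+2))⁻¹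
        * ((phiOdd c g)^2 * (((List.range g).map fun j => c (2*j+1)).prod
          * ((List.range g).map fun j => c (2*j+1)).prod))))) := by
    calc (phiOdd c g)^2 * (dl c g * dl c g)
        = phiOdd c g * (phiOdd c g * (dl c g * dl c g)) := by
          rw [pow_two, mul_assoc]
      _ = phiOdd c g * (c 1 * ((dl c g * dl c g)
          * (((List.range g).map fun j => c (2*(g-1-j)+1) ^ (g-j)).prod
            * ((List.range g).map fun j => c (2*j+1)).prod))) := by
          rw [corephi c g hbraid hcomm]
      _ = c 1 * ((phiOdd c g * (dl c g * dl c g))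
          * (((List.range g).map fun j => c (2*(g-1-j)+1) ^ (g-j)).prod
            * ((List.range g).map fun j => c (2*j+1)).prod)) := by
          rw [comm_move (c1_phi c g hcomm).symm]
          simp only [mul_assoc]
      _ = c 1 * ((c 1 * ((dl c g * dl c g)
          * (((List.range g).map fun j => c (2*(g-1-j)+1) ^ (g-j)).prod
            * ((List.range g).map fun j => c (2*j+1)).prod)))
          * (((List.range g).map fun j => c (2*(g-1-j)+1) ^ (g-j)).prod
            * ((List.range g).map fun j => c (2*j+1)).prod)) := by
          rw [corephi c g hbraid hcomm]
      _ = c 1 * (c 1 * ((dl c g * dl c g)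
          * (((List.range g).map fun j => c (2*(g-1-j)+1) ^ (g-j)).prod
            * (((List.range g).map fun j => c (2*j+1)).prod
              * (((List.range g).map fun j => c (2*(g-1-j)+1) ^ (g-j)).prod
                * ((List.range g).map fun j => c (2*j+1)).prod))))) := by
          simp only [mul_assoc]
      _ = c 1 * (c 1 * ((dl c g * dl c g)
          * (((List.range g).map fun j => c (2*(g-1-j)+1) ^ (g-j)).prod
            * (((List.range g).map fun j => c (2*(g-1-j)+1) ^ (g-j)).prod
              * (((List.range g).map fun j => c (2*j+1)).prod
                * ((List.range g).map fun j => c (2*j+1)).prod))))) := by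
          rw [comm_move (rho_U c g hcomm).symm]
      _ = c 1 * (c 1 * ((dl c g * dl c g) * (((c (2*g+1))^(2*g+2))⁻¹
          * ((phiOdd c g)^2 * (((List.range g).map fun j => c (2*j+1)).prod
            * ((List.range g).map fun j => c (2*j+1)).prod))))) := by
          rw [rhorho c g hcomm]
  intro x
  have := mul_tail base x
  simp only [mul_assoc] at this ⊢
  exact this

lemma bd_body : bd c g = ((List.range (2*g)).map fun j => c (2*g-j)).prod := rfl
lemma d2_body : d2 c g = ((List.range (2*g)).map fun j => c (2*g+1-j)).prod := rfl
lemma a2_body : a2 c g = ((List.range (2*g)).map fun j => c (2+j)).prod := rfl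
lemma aA_body : aA c g = ((List.range (2*g)).map fun j => c (1+j)).prod := rfl

def hel (c : ℕ → G) (g : ℕ) : G := dl c g * db c g

lemma db_decomp : db c g = (dl c g)⁻¹ * hel c g := (inv_mul_cancel_left _ _).symm

end St18

/-- the relator of Theorem 5.4: with
`d i = c (i+1) * c i * (c (i+1))⁻¹`, `d̄ i = (c (i+1))⁻¹ * c i * c (i+1)`,
`e (i+1) = c i * c (i+1) * (c i)⁻¹`, `ē (i+1) = (c i)⁻¹ * c (i+1) * c i`, and
`φ = c (2g+1)^{g+1} c (2g-1)^{g} ⋯ c 3 ^ 2 c 1`, assuming the braid relations,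
the hyperelliptic relation, and centrality, one has
`(φ⁻² ē (2g) φ²) ⋯ (φ⁻² ē 2 φ²) · (φ⁻² d (2g) φ²) ⋯ (φ⁻² d 2 φ²) ·
d̄ 2 ⋯ d̄ (2g) · e 2 ⋯ e (2g) · c 1 ² c 3 ² ⋯ c (2g-1)² · c (2g+1)^{2g+4} = 1`. -/
theorem statement18 {G : Type*} [Group G] (g : ℕ) (hg : 3 ≤ g) (c : ℕ → G)
    (hbraid : ∀ i, 1 ≤ i → i + 1 ≤ 2 * g + 1 →
      c i * c (i + 1) * c i = c (i + 1) * c i * c (i + 1))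
    (hcomm : ∀ i j, 1 ≤ i → j ≤ 2 * g + 1 → i + 2 ≤ j → c i * c j = c j * c i)
    (hhyper : (prodAsc c 1 (2 * g) * (c (2 * g + 1)) ^ 2 * prodDesc c (2 * g) 1) ^ 2 = 1)
    (hcentral : Commute (prodDesc c (2 * g) 1 * prodAsc c 1 (2 * g)) (c (2 * g + 1))) :
    (((List.range g).map fun j =>
        ((phiOdd c g) ^ 2)⁻¹ *
          ((c (2 * g - 2 * j - 1))⁻¹ * c (2 * g - 2 * j) * c (2 * g - 2 * j - 1)) *
          (phiOdd c g) ^ 2).prod) *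
      (((List.range g).map fun j =>
        ((phiOdd c g) ^ 2)⁻¹ *
          (c (2 * g - 2 * j + 1) * c (2 * g - 2 * j) * (c (2 * g - 2 * j + 1))⁻¹) *
          (phiOdd c g) ^ 2).prod) *
      (((List.range g).map fun j =>
        (c (2 * j + 3))⁻¹ * c (2 * j + 2) * c (2 * j + 3)).prod) *
      (((List.range g).map fun j =>
        c (2 * j + 1) * c (2 * j + 2) * (c (2 * j + 1))⁻¹).prod) *
      (((List.range g).map fun j => (c (2 * j + 1)) ^ 2).prod) *
      (c (2 * g + 1)) ^ (2 * g + 4) = 1 := by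
  open St18 in
  have hA_id : prodAsc c 1 (2*g) = aA c g := rfl
  have hB_id : prodDesc c (2*g) 1 = bd c g := rfl
  have hcent' : Commute (bd c g * aA c g) (c (2*g+1)) := by
    rw [← hA_id, ← hB_id]; exact hcentral
  have hhyp' : (aA c g * c (2*g+1)^2 * bd c g)^2 = 1 := by
    rw [← hA_id, ← hB_id]; exact hhyper
  rw [conj_rmp, conj_rmp, ebar_eq c g hbraid hcomm g (le_refl g),
    dd_eq c g hbraid hcomm g (le_refl g), dbar_eq c g hcomm g (le_refl g),
    e_eq c g hcomm g (le_refl g), q_eq c g hcomm,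
    ← bd_body, ← d2_body, ← a2_body, ← aA_body]
  have bd_eq' : bd c g = (c (2*g+1))⁻¹ * db c g := by rw [db_head]; group
  have d2_eq' : d2 c g = db c g * (c 1)⁻¹ := by rw [db_last]; group
  have a2_eq' : a2 c g = (c 1)⁻¹ * dl c g := by rw [dl_head]; group
  have aA_eq' : aA c g = dl c g * (c (2*g+1))⁻¹ := by rw [dl_last]; group
  rw [bd_eq', d2_eq', a2_eq', aA_eq']
  simp only [mul_assoc, inv_mul_cancel_left, mul_inv_cancel_left]
  -- Step: t⁻¹ past U, merge t-powers
  rw [comm_move ((t_U c g hcomm).inv_left)]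
  have hT : (c (2*g+1))⁻¹ * (c (2*g+1))^(2*g+4) = (c (2*g+1))^(2*g+3) := by
    rw [show 2*g+4 = (2*g+3)+1 by omega, pow_succ']
    exact inv_mul_cancel_left _ _
  rw [hT]
  -- Step: φ² moves right past uUp⁻¹ and c1⁻¹
  have phi2_uUp_inv : Commute (phiOdd c g ^ 2)
      (((List.range g).map fun j => c (2*j+3)).prod)⁻¹ :=
    ((phi_uUp c g hcomm).pow_left 2).inv_right
  have phi2_c1inv : Commute (phiOdd c g ^ 2) (c 1)⁻¹ :=
    (((c1_phi c g hcomm).symm).pow_left 2).inv_right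
  rw [comm_move phi2_uUp_inv, comm_move phi2_c1inv]
  -- Step: the key φ²-conjugation identity
  rw [key10 c g hbraid hcomm]
  simp only [inv_mul_cancel_left]
  have c1_uUp : Commute (c 1) (((List.range g).map fun j => c (2*j+3)).prod) :=
    commute_rmp _ _ _ fun j hj => cc c g hcomm 1 (2*j+3) (by omega) (by omega) (by omega)
  rw [comm_move (c1_uUp.symm.inv_left)]
  simp only [inv_mul_cancel_left]
  -- Step: φ² moves right past uU's and t-powers merge
  have phi2_U : Commute (phiOdd c g ^ 2) (((List.range g).map fun j => c (2*j+1)).prod) :=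
    (phi_U c g hcomm).pow_left 2
  rw [comm_move phi2_U, comm_move phi2_U, comm_move phi2_U,
    (((codd_phi c g hcomm g (le_refl g)).symm.pow_left 2).pow_right (2*g+3)).eq]
  have hTU2 : Commute (((c (2*g+1))^(2*g+2))⁻¹)
      (((List.range g).map fun j => c (2*j+1)).prod) :=
    ((t_U c g hcomm).pow_left _).inv_left
  rw [comm_move hTU2, comm_move hTU2, comm_move hTU2]
  have hT2 : ((c (2*g+1))^(2*g+2))⁻¹ * ((c (2*g+1))^(2*g+3) * (phiOdd c g)^2)
      = c (2*g+1) * (phiOdd c g)^2 := by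
    have e : (c (2*g+1))^(2*g+3) = (c (2*g+1))^(2*g+2) * c (2*g+1) := by
      rw [← pow_succ]
    rw [e]
    simp only [mul_assoc, inv_mul_cancel_left]
  rw [hT2]
  -- Step: central element h
  have hel_sq : hel c g * hel c g = 1 := h_sq c g hhyp'
  have hel_wD : Commute (hel c g) (((List.range g).map fun j => c (2*g-2*j)).prod) :=
    commute_rmp _ _ _ fun j hj =>
      h_comm c g hbraid hcomm hcent' (2*g-2*j) (by omega) (by omega)
  have hel_dl : Commute (hel c g) (dl c g) :=
    commute_rmp _ _ _ fun j hj =>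
      h_comm c g hbraid hcomm hcent' (1+j) (by omega) (by omega)
  rw [db_decomp]
  simp only [mul_assoc]
  rw [comm_move hel_wD.inv_right, comm_move hel_wD.inv_right, comm_move hel_dl.inv_right]
  have hel2 : ∀ x : G, hel c g * (hel c g * x) = x := fun x => by
    rw [← mul_assoc, hel_sq, one_mul]
  rw [hel2]
  -- Step: the braid-shift identity and final cancellations
  rw [K1 c g hbraid hcomm]
  simp only [inv_mul_cancel_left]
  rw [wd_eq c g hcomm]
  simp only [inv_mul_cancel_left]
  group
end
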